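/- arXiv:2309.06603 — 15 statements merged into one kernel-verified Lean document; each statement's English description precedes it below -/
import Mathlib

section
/- (Rotation axis is a principal axis.) Let Ω ∈ ℝ³ with Ω ≠ 0, and let q₁, …, q_n : ℝ → ℝ³ be differentiable curves with |q_ℓ(t)| = 1 and q_ℓ′(t) = Ω × q_ℓ(t) for all t and all ℓ. Define the angular momentum c(t) = ∑_ℓ m_ℓ q_ℓ(t) × q_ℓ′(t) and the inertia tensor I(t) = M·Id − ∑_ℓ m_ℓ q_ℓ(t) q_ℓ(t)ᵀ. Then c(t) = I(t)Ω for every t, and if c(t) is constant in t, then for every t there exists λ ∈ ℝ with I(t)Ω = λΩ, i.e. Ω is an eigenvector of the inertia tensor. -/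
open Matrix

/-! A point rotating about the axis `Ω` has velocity `Ω × q`, so its contribution
`q × (Ω × q) = |q|² Ω - (q ⬝ Ω) q` to the angular momentum is `(Id - q qᵀ) Ω`; summing gives
`c = I Ω`. Since `d/dt` acts on cross products by the Leibniz rule and `Ω ×` is a derivation of
the cross product (Jacobi identity), every `u × v` built from co-rotating vectors co-rotates
as well, so `c' = Ω × c`. If `c` is constant then `Ω × IΩ = Ω × c = 0`, and `IΩ` is parallel
to `Ω ≠ 0`. -/

theorem HasDerivAt.cross {𝕜 : Type*} [NontriviallyNormedField 𝕜] [CompleteSpace 𝕜]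
    {f g : 𝕜 → Fin 3 → 𝕜} {f' g' : Fin 3 → 𝕜} {t : 𝕜}
    (hf : HasDerivAt f f' t) (hg : HasDerivAt g g' t) :
    HasDerivAt (fun s => f s ⨯₃ g s) (f' ⨯₃ g t + f t ⨯₃ g') t := by
  let B : (Fin 3 → 𝕜) →L[𝕜] (Fin 3 → 𝕜) →L[𝕜] (Fin 3 → 𝕜) :=
    LinearMap.toContinuousLinearMap (LinearMap.toContinuousLinearMap.toLinearMap ∘ₗ crossProduct)
  simpa [B, add_comm] using B.hasDerivAt_of_bilinear (fun _ => hf) (fun _ => hg)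

theorem HasDerivAt.cross_of_rotating {𝕜 : Type*} [NontriviallyNormedField 𝕜] [CompleteSpace 𝕜]
    {u v : 𝕜 → Fin 3 → 𝕜} {Ω : Fin 3 → 𝕜} {t : 𝕜}
    (hu : HasDerivAt u (Ω ⨯₃ u t) t) (hv : HasDerivAt v (Ω ⨯₃ v t) t) :
    HasDerivAt (fun s => u s ⨯₃ v s) (Ω ⨯₃ (u t ⨯₃ v t)) t := by
  rw [leibniz_cross]
  exact hu.cross hv

theorem exists_eq_smul_of_cross_eq_zero {F : Type*} [Field F] {Ω v : Fin 3 → F} (hΩ : Ω ≠ 0)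
    (h : Ω ⨯₃ v = 0) :
    ∃ a : F, v = a • Ω := by
  have := mt crossProduct_ne_zero_iff_linearIndependent.mpr (not_not.mpr h)
  simpa [LinearIndependent.pair_iff' hΩ, eq_comm] using this

theorem cross_cross_of_dotProduct_self_eq_one {R : Type*} [CommRing R] {q : Fin 3 → R}
    (hq : q ⬝ᵥ q = 1) (Ω : Fin 3 → R) :
    q ⨯₃ (Ω ⨯₃ q) = Ω - vecMulVec q q *ᵥ Ω := by
  rw [cross_cross_eq_smul_sub_smul', hq, one_smul, vecMulVec_mulVec, op_smul_eq_smul,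
    dotProduct_comm]

theorem sum_smul_cross_cross_eq_inertia_mulVec {R ι : Type*} [CommRing R] [Fintype ι]
    (m : ι → R) (q : ι → Fin 3 → R) (hq : ∀ ℓ, q ℓ ⬝ᵥ q ℓ = 1) (Ω : Fin 3 → R) :
    ∑ ℓ, m ℓ • (q ℓ ⨯₃ (Ω ⨯₃ q ℓ)) =
      ((∑ ℓ, m ℓ) • (1 : Matrix (Fin 3) (Fin 3) R) - ∑ ℓ, m ℓ • vecMulVec (q ℓ) (q ℓ)) *ᵥ Ω := by
  simp_rw [cross_cross_of_dotProduct_self_eq_one (hq _), sub_mulVec, smul_mulVec, one_mulVec,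
    sum_mulVec, smul_mulVec, smul_sub, Finset.sum_sub_distrib, Finset.sum_smul]

theorem stmt1_general (n : ℕ) (m : Fin n → ℝ)
    (M : ℝ) (hM : M = ∑ ℓ, m ℓ)
    (Ω : Fin 3 → ℝ) (hΩ : Ω ≠ 0)
    (q : Fin n → ℝ → Fin 3 → ℝ)
    (hunit : ∀ ℓ t, q ℓ t ⬝ᵥ q ℓ t = 1)
    (hderiv : ∀ ℓ t, HasDerivAt (q ℓ) (Ω ⨯₃ q ℓ t) t)
    (c : ℝ → Fin 3 → ℝ)
    (hc : ∀ t, c t = ∑ ℓ, m ℓ • (q ℓ t ⨯₃ (Ω ⨯₃ q ℓ t)))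
    (I : ℝ → Matrix (Fin 3) (Fin 3) ℝ)
    (hI : ∀ t, I t = M • (1 : Matrix (Fin 3) (Fin 3) ℝ)
      - ∑ ℓ, m ℓ • vecMulVec (q ℓ t) (q ℓ t)) :
    (∀ t, c t = I t *ᵥ Ω) ∧
      ((∀ t s, c t = c s) → ∀ t, ∃ lam : ℝ, I t *ᵥ Ω = lam • Ω) := by
  have hcI : ∀ t, c t = I t *ᵥ Ω := fun t => by
    rw [hc, hI, hM, sum_smul_cross_cross_eq_inertia_mulVec _ _ (hunit · t)]
  refine ⟨hcI, fun hconst t => ?_⟩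
  have hc_deriv : HasDerivAt c (Ω ⨯₃ c t) t := by
    have hΩ_deriv : HasDerivAt (fun _ => Ω) (Ω ⨯₃ Ω) t := by
      simpa [cross_self] using hasDerivAt_const t Ω
    rw [hc t, map_sum, funext hc]
    simp_rw [map_smul]
    exact HasDerivAt.fun_sum fun ℓ _ =>
      ((hderiv ℓ t).cross_of_rotating (hΩ_deriv.cross_of_rotating (hderiv ℓ t))).fun_const_smul _
  have hc_deriv_zero : HasDerivAt c 0 t := by
    rw [show c = fun _ => c t from funext (hconst · t)]
    exact hasDerivAt_const t _
  rw [← hcI]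
  exact exists_eq_smul_of_cross_eq_zero hΩ (hc_deriv.unique hc_deriv_zero)

/-- (Rotation axis is a principal axis.) If each unit-vector body satisfies
`qₗ′(t) = Ω × qₗ(t)` with `Ω ≠ 0`, then the angular momentum
`c(t) = ∑ₗ mₗ qₗ(t) × qₗ′(t)` equals `I(t) Ω`, where
`I(t) = M·Id − ∑ₗ mₗ qₗ(t) qₗ(t)ᵀ`; and if `c` is constant in time, then for every `t`
there is `λ ∈ ℝ` with `I(t) Ω = λ Ω`. -/
theorem stmt1 (n : ℕ) (hn : 1 ≤ n) (m : Fin n → ℝ) (hm : ∀ ℓ, 0 < m ℓ)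
    (M : ℝ) (hM : M = ∑ ℓ, m ℓ)
    (Ω : Fin 3 → ℝ) (hΩ : Ω ≠ 0)
    (q : Fin n → ℝ → Fin 3 → ℝ)
    (hunit : ∀ ℓ t, q ℓ t ⬝ᵥ q ℓ t = 1)
    (hderiv : ∀ ℓ t, HasDerivAt (q ℓ) (Ω ⨯₃ q ℓ t) t)
    (c : ℝ → Fin 3 → ℝ)
    (hc : ∀ t, c t = ∑ ℓ, m ℓ • (q ℓ t ⨯₃ (Ω ⨯₃ q ℓ t)))
    (I : ℝ → Matrix (Fin 3) (Fin 3) ℝ)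
    (hI : ∀ t, I t = M • (1 : Matrix (Fin 3) (Fin 3) ℝ)
      - ∑ ℓ, m ℓ • vecMulVec (q ℓ t) (q ℓ t)) :
    (∀ t, c t = I t *ᵥ Ω) ∧
      ((∀ t s, c t = c s) → ∀ t, ∃ lam : ℝ, I t *ᵥ Ω = lam • Ω) :=
  stmt1_general n m M hM Ω hΩ q hunit hderiv c hc I hI
end

section
/- If e ∈ ℝ³ satisfies I e = λ e for some λ ∈ ℝ, then the vector v ∈ ℝ³ with components v_i = √(m_i) (q_i · e), i = 1,2,3, satisfies J v = λ v. -/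
open Matrix BigOperators

/-!
Let `A` be the matrix whose rows are `√mᵢ qᵢ`. Then `I = M - AᵀA` and `J = M - AAᵀ`, and the
intertwining relation `A (M - AᵀA) = (M - AAᵀ) A` carries an eigenvector `e` of `I` to the
eigenvector `v = A e` of `J`.
-/

namespace Matrix

variable {m n R : Type*} [Fintype m] [Fintype n] [DecidableEq m] [DecidableEq n] [CommRing R]

theorem mul_smul_one_sub_mul (A : Matrix m n R) (B : Matrix n m R) (c : R) :
    A * (c • 1 - B * A) = (c • 1 - A * B) * A := by
  simp only [Matrix.mul_sub, Matrix.sub_mul, Matrix.mul_smul, Matrix.smul_mul, Matrix.mul_one,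
    Matrix.one_mul, Matrix.mul_assoc]

theorem mulVec_mulVec_eq_smul_of_mulVec_eq_smul {A : Matrix m n R} {B : Matrix n m R}
    {c lam : R} {e : n → R} (h : (c • 1 - B * A) *ᵥ e = lam • e) :
    (c • 1 - A * B) *ᵥ (A *ᵥ e) = lam • (A *ᵥ e) := by
  rw [mulVec_mulVec, ← mul_smul_one_sub_mul, ← mulVec_mulVec, h, mulVec_smul]

end Matrix

section MassWeighted

variable {ι κ : Type*}

noncomputable def massWeighted (m : ι → ℝ) (q : ι → κ → ℝ) : Matrix ι κ ℝ :=
  of fun i k => √(m i) * q i k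

theorem massWeighted_mulVec [Fintype κ] (m : ι → ℝ) (q : ι → κ → ℝ) (e : κ → ℝ) (i : ι) :
    (massWeighted m q *ᵥ e) i = √(m i) * (q i ⬝ᵥ e) := by
  simp only [massWeighted, mulVec, dotProduct, of_apply, Finset.mul_sum, mul_assoc]

theorem transpose_massWeighted_mul [Fintype ι] {m : ι → ℝ} (hm : ∀ i, 0 ≤ m i) (q : ι → κ → ℝ) :
    (massWeighted m q)ᵀ * massWeighted m q = ∑ i, m i • vecMulVec (q i) (q i) := by
  ext k l
  simp only [massWeighted, mul_apply, transpose_apply, of_apply, Matrix.sum_apply,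
    Matrix.smul_apply, vecMulVec_apply, smul_eq_mul]
  refine Finset.sum_congr rfl fun i _ => ?_
  linear_combination (q i k * q i l) * Real.mul_self_sqrt (hm i)

theorem massWeighted_mul_transpose [Fintype κ] {m : ι → ℝ} (hm : ∀ i, 0 ≤ m i) (q : ι → κ → ℝ)
    (i j : ι) :
    (massWeighted m q * (massWeighted m q)ᵀ) i j = √(m i * m j) * (q i ⬝ᵥ q j) := by
  simp only [massWeighted, mul_apply, transpose_apply, of_apply, dotProduct, Finset.mul_sum,
    Real.sqrt_mul (hm i)]
  exact Finset.sum_congr rfl fun k _ => by ring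

end MassWeighted

theorem stmt2_general (m : Fin 3 → ℝ) (hm : ∀ i, 0 < m i)
    (q : Fin 3 → Fin 3 → ℝ)
    (M : ℝ)
    (I : Matrix (Fin 3) (Fin 3) ℝ)
    (hI : I = M • (1 : Matrix (Fin 3) (Fin 3) ℝ) - ∑ i, m i • vecMulVec (q i) (q i))
    (J : Matrix (Fin 3) (Fin 3) ℝ)
    (hJ : ∀ i j, J i j = (if i = j then M else 0) - Real.sqrt (m i * m j) * (q i ⬝ᵥ q j))
    (lam : ℝ) (e : Fin 3 → ℝ) (he : I *ᵥ e = lam • e)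
    (v : Fin 3 → ℝ) (hv : ∀ i, v i = Real.sqrt (m i) * (q i ⬝ᵥ e)) :
    J *ᵥ v = lam • v := by
  have hm₀ : ∀ i, 0 ≤ m i := fun i => (hm i).le
  set A := massWeighted m q
  have hIA : I = M • 1 - Aᵀ * A := by rw [hI, transpose_massWeighted_mul hm₀]
  have hJA : J = M • 1 - A * Aᵀ := by
    ext i j
    rw [hJ, Matrix.sub_apply, Matrix.smul_apply, one_apply, massWeighted_mul_transpose hm₀]
    split_ifs <;> simp
  have hvA : v = A *ᵥ e := funext fun i => by rw [hv, massWeighted_mulVec]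
  rw [hJA, hvA]
  exact mulVec_mulVec_eq_smul_of_mulVec_eq_smul (hIA ▸ he)

/-- If `e` is an eigenvector of the inertia tensor `I` with eigenvalue `λ`,
then the vector `v` with components `vᵢ = √(mᵢ) (qᵢ · e)` is an eigenvector of the matrix
`J`, `Jᵢⱼ = M δᵢⱼ − √(mᵢ mⱼ)(qᵢ·qⱼ)`, with the same eigenvalue. -/
theorem stmt2 (m : Fin 3 → ℝ) (hm : ∀ i, 0 < m i)
    (q : Fin 3 → Fin 3 → ℝ) (hq : ∀ i, q i ⬝ᵥ q i = 1)
    (M : ℝ) (hM : M = ∑ i, m i)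
    (I : Matrix (Fin 3) (Fin 3) ℝ)
    (hI : I = M • (1 : Matrix (Fin 3) (Fin 3) ℝ) - ∑ i, m i • vecMulVec (q i) (q i))
    (J : Matrix (Fin 3) (Fin 3) ℝ)
    (hJ : ∀ i j, J i j = (if i = j then M else 0) - Real.sqrt (m i * m j) * (q i ⬝ᵥ q j))
    (lam : ℝ) (e : Fin 3 → ℝ) (he : I *ᵥ e = lam • e)
    (v : Fin 3 → ℝ) (hv : ∀ i, v i = Real.sqrt (m i) * (q i ⬝ᵥ e)) :
    J *ᵥ v = lam • v :=
  stmt2_general m hm q M I hI J hJ lam e he v hv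
end

section
/- The matrices I and J are similar: there exists an invertible real 3×3 matrix P such that J = P I P⁻¹ (equivalently, I and J have the same characteristic polynomial). -/
/-!
With `W` the matrix whose `j`-th column is `√(m j) • q j`, one has `I = M • 1 - W * Wᵀ` and
`J = M • 1 - Wᵀ * W`. The symmetric matrices `W * Wᵀ` and `Wᵀ * W` have the same characteristic
polynomial, hence the same eigenvalues, so by the spectral theorem they are conjugate by an
orthogonal matrix; that conjugation carries `I` to `J`.
-/

open Matrix Unitary

namespace Matrix

variable {𝕜 n : Type*} [RCLike 𝕜] [Fintype n] [DecidableEq n]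

theorem IsHermitian.exists_conjStarAlgAut_eq_of_charpoly_eq {A B : Matrix n n 𝕜}
    (hA : A.IsHermitian) (hB : B.IsHermitian) (h : A.charpoly = B.charpoly) :
    ∃ U : unitaryGroup n 𝕜, B = conjStarAlgAut 𝕜 _ U A := by
  have hAB : hA.eigenvalues = hB.eigenvalues := (hA.eigenvalues_eq_eigenvalues_iff hB).mpr h
  refine ⟨hB.eigenvectorUnitary * star hA.eigenvectorUnitary, ?_⟩
  rw [conjStarAlgAut_mul_apply, hA.conjStarAlgAut_star_eigenvectorUnitary, hAB,
    ← hB.spectral_theorem]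

theorem exists_conjTranspose_mul_self_eq_conjStarAlgAut (A : Matrix n n 𝕜) :
    ∃ U : unitaryGroup n 𝕜, Aᴴ * A = conjStarAlgAut 𝕜 _ U (A * Aᴴ) :=
  (isHermitian_mul_conjTranspose_self A).exists_conjStarAlgAut_eq_of_charpoly_eq
    (isHermitian_conjTranspose_mul_self A) (charpoly_mul_comm _ _)

end Matrix

section InertiaTensor

variable {ι d : Type*} (m : ι → ℝ) (q : ι → d → ℝ)

noncomputable def massWeightedColumns : Matrix d ι ℝ := of fun i j => √(m j) * q j i

variable {m}

theorem massWeightedColumns_mul_transpose [Fintype ι] (hm : ∀ j, 0 ≤ m j) :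
    massWeightedColumns m q * (massWeightedColumns m q)ᵀ = ∑ j, m j • vecMulVec (q j) (q j) := by
  ext a b
  simp only [mul_apply, transpose_apply, massWeightedColumns, of_apply, Matrix.sum_apply,
    Matrix.smul_apply, vecMulVec_apply, smul_eq_mul]
  refine Finset.sum_congr rfl fun j _ => ?_
  linear_combination q j a * q j b * Real.mul_self_sqrt (hm j)

theorem transpose_mul_massWeightedColumns_apply [Fintype d] (hm : ∀ j, 0 ≤ m j) (i j : ι) :
    ((massWeightedColumns m q)ᵀ * massWeightedColumns m q) i j =
      √(m i * m j) * (q i ⬝ᵥ q j) := by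
  simp only [mul_apply, transpose_apply, massWeightedColumns, of_apply, dotProduct,
    Real.sqrt_mul (hm i), Finset.mul_sum]
  exact Finset.sum_congr rfl fun k _ => by ring

end InertiaTensor

theorem stmt3_general (m : Fin 3 → ℝ) (hm : ∀ i, 0 < m i)
    (q : Fin 3 → Fin 3 → ℝ)
    (M : ℝ)
    (I : Matrix (Fin 3) (Fin 3) ℝ)
    (hI : I = M • (1 : Matrix (Fin 3) (Fin 3) ℝ) - ∑ i, m i • vecMulVec (q i) (q i))
    (J : Matrix (Fin 3) (Fin 3) ℝ)
    (hJ : ∀ i j, J i j = (if i = j then M else 0) - Real.sqrt (m i * m j) * (q i ⬝ᵥ q j)) :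
    ∃ P : Matrix (Fin 3) (Fin 3) ℝ, IsUnit P.det ∧ J = P * I * P⁻¹ := by
  have hm₀ i : 0 ≤ m i := (hm i).le
  set W := massWeightedColumns m q
  have hI' : I = M • 1 - W * Wᴴ := by
    rw [hI, conjTranspose_eq_transpose_of_trivial, massWeightedColumns_mul_transpose q hm₀]
  have hJ' : J = M • 1 - Wᴴ * W := by
    ext i j
    rw [hJ, conjTranspose_eq_transpose_of_trivial, Matrix.sub_apply,
      transpose_mul_massWeightedColumns_apply q hm₀, Matrix.smul_apply, one_apply, smul_ite,
      smul_eq_mul, mul_one, smul_zero]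
  obtain ⟨U, hU⟩ := exists_conjTranspose_mul_self_eq_conjStarAlgAut W
  refine ⟨U, UnitaryGroup.det_isUnit U, ?_⟩
  rw [inv_eq_left_inv (UnitaryGroup.star_mul_self U), hJ', hU, hI']
  change _ = conjStarAlgAut ℝ _ U _
  rw [map_sub, map_smul, map_one]

/-- The inertia tensor `I` and the matrix `J` are similar: there is an
invertible matrix `P` with `J = P * I * P⁻¹`. -/
theorem stmt3 (m : Fin 3 → ℝ) (hm : ∀ i, 0 < m i)
    (q : Fin 3 → Fin 3 → ℝ) (hq : ∀ i, q i ⬝ᵥ q i = 1)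
    (M : ℝ) (hM : M = ∑ i, m i)
    (I : Matrix (Fin 3) (Fin 3) ℝ)
    (hI : I = M • (1 : Matrix (Fin 3) (Fin 3) ℝ) - ∑ i, m i • vecMulVec (q i) (q i))
    (J : Matrix (Fin 3) (Fin 3) ℝ)
    (hJ : ∀ i j, J i j = (if i = j then M else 0) - Real.sqrt (m i * m j) * (q i ⬝ᵥ q j)) :
    ∃ P : Matrix (Fin 3) (Fin 3) ℝ, IsUnit P.det ∧ J = P * I * P⁻¹ :=
  stmt3_general m hm q M I hI J hJ
end

section
/- Suppose v ∈ ℝ³ with |v| = 1 satisfies J v = λ v for some λ < M. Then the vector e := (M − λ)^{−1/2} ∑_{ℓ=1}^{3} √(m_ℓ) v_ℓ q_ℓ is a unit vector, satisfies I e = λ e, and √(m_i) (q_i · e) = √(M − λ) · v_i for each i = 1,2,3. In particular, every eigenvector of J with eigenvalue λ < M corresponds to an eigenvector of the inertia tensor I with the same eigenvalue. -/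
/-!
Write `A` for the matrix whose `i`-th column is `√mᵢ qᵢ`. Then `J = M - AᵀA` and
`I = M - AAᵀ`, so an eigenvector `v` of `J` for `λ < M` is a right singular vector of `A`
with singular value `√(M - λ)`, and `e = (M - λ)^{-1/2} A v` is the matching left singular
vector, i.e. an eigenvector of `AAᵀ`, hence of `I`, for the same eigenvalue.
-/

open Matrix BigOperators

namespace Matrix

section SingularVector

variable {ι n : Type*} [Fintype ι] [Fintype n] (A : Matrix n ι ℝ) {μ : ℝ} {v : ι → ℝ}

theorem smul_one_sub_mulVec_eq_smul_iff [DecidableEq ι] (B : Matrix ι ι ℝ) (c lam : ℝ) :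
    (c • (1 : Matrix ι ι ℝ) - B) *ᵥ v = lam • v ↔ B *ᵥ v = (c - lam) • v := by
  rw [sub_mulVec, smul_mulVec, one_mulVec, sub_smul]
  constructor <;> intro h
  · rw [← h, sub_sub_cancel]
  · rw [h, sub_sub_cancel]

theorem transpose_mulVec_inv_sqrt_smul_mulVec (hv : (Aᵀ * A) *ᵥ v = μ • v) :
    Aᵀ *ᵥ ((√μ)⁻¹ • A *ᵥ v) = √μ • v := by
  rw [mulVec_smul, mulVec_mulVec, hv, smul_smul, inv_mul_eq_div, Real.div_sqrt]

theorem dotProduct_self_inv_sqrt_smul_mulVec (hμ : 0 < μ) (hv : (Aᵀ * A) *ᵥ v = μ • v) :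
    ((√μ)⁻¹ • A *ᵥ v) ⬝ᵥ ((√μ)⁻¹ • A *ᵥ v) = v ⬝ᵥ v := by
  rw [dotProduct_smul, dotProduct_mulVec, ← mulVec_transpose,
    transpose_mulVec_inv_sqrt_smul_mulVec A hv, smul_dotProduct, smul_smul,
    inv_mul_cancel₀ (Real.sqrt_pos.mpr hμ).ne', one_smul]

theorem mul_transpose_mulVec_inv_sqrt_smul_mulVec (hv : (Aᵀ * A) *ᵥ v = μ • v) :
    (A * Aᵀ) *ᵥ ((√μ)⁻¹ • A *ᵥ v) = μ • ((√μ)⁻¹ • A *ᵥ v) := by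
  rw [← mulVec_mulVec, transpose_mulVec_inv_sqrt_smul_mulVec A hv, mulVec_smul, smul_smul,
    ← div_eq_mul_inv, Real.div_sqrt]

end SingularVector

section PointMasses

variable {ι n : Type*} (m : ι → ℝ) (q : ι → n → ℝ)

noncomputable def weightedColumns : Matrix n ι ℝ :=
  Matrix.of fun k i => √(m i) * q i k

theorem weightedColumns_mulVec [Fintype ι] (v : ι → ℝ) :
    weightedColumns m q *ᵥ v = ∑ i, (√(m i) * v i) • q i := by
  ext k
  simp only [mulVec, dotProduct, weightedColumns, of_apply, Finset.sum_apply, Pi.smul_apply,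
    smul_eq_mul]
  exact Finset.sum_congr rfl fun i _ => by ring

theorem transpose_weightedColumns_mulVec_apply [Fintype n] (x : n → ℝ) (i : ι) :
    ((weightedColumns m q)ᵀ *ᵥ x) i = √(m i) * (q i ⬝ᵥ x) := by
  simp only [mulVec, dotProduct, transpose_apply, weightedColumns, of_apply, Finset.mul_sum,
    mul_assoc]

variable {m}

theorem transpose_weightedColumns_mul_apply [Fintype n] (hm : ∀ i, 0 ≤ m i) (i j : ι) :
    ((weightedColumns m q)ᵀ * weightedColumns m q) i j = √(m i * m j) * (q i ⬝ᵥ q j) := by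
  simp only [mul_apply, dotProduct, transpose_apply, weightedColumns, of_apply,
    Real.sqrt_mul (hm i), Finset.mul_sum]
  exact Finset.sum_congr rfl fun k _ => by ring

theorem weightedColumns_mul_transpose [Fintype ι] (hm : ∀ i, 0 ≤ m i) :
    weightedColumns m q * (weightedColumns m q)ᵀ = ∑ i, m i • vecMulVec (q i) (q i) := by
  ext k l
  simp only [mul_apply, transpose_apply, weightedColumns, of_apply, sum_apply, smul_apply,
    vecMulVec_apply, smul_eq_mul]
  refine Finset.sum_congr rfl fun i _ => ?_
  linear_combination q i k * q i l * Real.mul_self_sqrt (hm i)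

end PointMasses

end Matrix

theorem stmt4_general (m : Fin 3 → ℝ) (hm : ∀ i, 0 < m i)
    (q : Fin 3 → Fin 3 → ℝ)
    (M : ℝ)
    (I : Matrix (Fin 3) (Fin 3) ℝ)
    (hI : I = M • (1 : Matrix (Fin 3) (Fin 3) ℝ) - ∑ i, m i • vecMulVec (q i) (q i))
    (J : Matrix (Fin 3) (Fin 3) ℝ)
    (hJ : ∀ i j, J i j = (if i = j then M else 0) - Real.sqrt (m i * m j) * (q i ⬝ᵥ q j))
    (lam : ℝ) (hlam : lam < M)
    (v : Fin 3 → ℝ) (hv : v ⬝ᵥ v = 1) (hJv : J *ᵥ v = lam • v)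
    (e : Fin 3 → ℝ)
    (he : e = (Real.sqrt (M - lam))⁻¹ • ∑ i, (Real.sqrt (m i) * v i) • q i) :
    e ⬝ᵥ e = 1 ∧ I *ᵥ e = lam • e ∧
      ∀ i, Real.sqrt (m i) * (q i ⬝ᵥ e) = Real.sqrt (M - lam) * v i := by
  have hm₀ : ∀ i, 0 ≤ m i := fun i => (hm i).le
  set A := weightedColumns m q
  have hJA : J = M • 1 - Aᵀ * A := by
    ext i j
    rw [hJ, Matrix.sub_apply, transpose_weightedColumns_mul_apply q hm₀, Matrix.smul_apply,
      one_apply, smul_ite, smul_eq_mul, mul_one, smul_zero]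
  have hIA : I = M • 1 - A * Aᵀ := by rw [hI, weightedColumns_mul_transpose q hm₀]
  have hAv : (Aᵀ * A) *ᵥ v = (M - lam) • v :=
    (smul_one_sub_mulVec_eq_smul_iff _ _ _).mp (hJA ▸ hJv)
  rw [← weightedColumns_mulVec] at he
  subst he
  refine ⟨?_, ?_, fun i => ?_⟩
  · rw [dotProduct_self_inv_sqrt_smul_mulVec A (sub_pos.mpr hlam) hAv, hv]
  · rw [hIA, smul_one_sub_mulVec_eq_smul_iff, mul_transpose_mulVec_inv_sqrt_smul_mulVec A hAv]
  · rw [← transpose_weightedColumns_mulVec_apply, transpose_mulVec_inv_sqrt_smul_mulVec A hAv,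
      Pi.smul_apply, smul_eq_mul]

/-- If a unit vector `v` satisfies `J v = λ v` with `λ < M`, then
`e := (M − λ)^{−1/2} ∑ₗ √(mₗ) vₗ qₗ` is a unit vector with `I e = λ e`, and
`√(mᵢ)(qᵢ · e) = √(M − λ) vᵢ` for each `i`. -/
theorem stmt4 (m : Fin 3 → ℝ) (hm : ∀ i, 0 < m i)
    (q : Fin 3 → Fin 3 → ℝ) (hq : ∀ i, q i ⬝ᵥ q i = 1)
    (M : ℝ) (hM : M = ∑ i, m i)
    (I : Matrix (Fin 3) (Fin 3) ℝ)
    (hI : I = M • (1 : Matrix (Fin 3) (Fin 3) ℝ) - ∑ i, m i • vecMulVec (q i) (q i))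
    (J : Matrix (Fin 3) (Fin 3) ℝ)
    (hJ : ∀ i j, J i j = (if i = j then M else 0) - Real.sqrt (m i * m j) * (q i ⬝ᵥ q j))
    (lam : ℝ) (hlam : lam < M)
    (v : Fin 3 → ℝ) (hv : v ⬝ᵥ v = 1) (hJv : J *ᵥ v = lam • v)
    (e : Fin 3 → ℝ)
    (he : e = (Real.sqrt (M - lam))⁻¹ • ∑ i, (Real.sqrt (m i) * v i) • q i) :
    e ⬝ᵥ e = 1 ∧ I *ᵥ e = lam • e ∧
      ∀ i, Real.sqrt (m i) * (q i ⬝ᵥ e) = Real.sqrt (M - lam) * v i :=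
  stmt4_general m hm q M I hI J hJ lam hlam v hv hJv e he
end

section
/- Let (e_x, e_y, e_z) be an orthonormal basis of ℝ³ and let v ∈ ℝ³ be the vector with components v_i = √(m_i) (q_i · e_z), i = 1,2,3. Then the identity vᵀ J v = (∑_{ℓ=1}^{3} m_ℓ (q_ℓ·e_z)²) · (∑_{ℓ=1}^{3} m_ℓ (1 − (q_ℓ·e_z)²)) − ((e_xᵀ I e_z)² + (e_yᵀ I e_z)²) holds. -/
/-! With `cᵢ = qᵢ · e_z` and `w = ∑ mᵢ cᵢ qᵢ`, `J` is `M` minus the Gram matrix of the vectors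
`√mᵢ qᵢ`, so `vᵀ J v = M ∑ mᵢ cᵢ² - |w|²`. On the other side `I e_z = M e_z - w`, so
`e_xᵀ I e_z = -(e_x · w)`, `e_yᵀ I e_z = -(e_y · w)` and `e_z · w = ∑ mᵢ cᵢ²`; expanding `|w|²`
in the orthonormal basis turns the right-hand side into the same expression. -/

open Matrix

section

variable {ι κ R : Type*} [Fintype ι] [Fintype κ] [CommRing R]

theorem dotProduct_self_eq_sum_sq_of_mul_transpose_eq_one [DecidableEq κ]
    {A : Matrix κ κ R} (hA : A * Aᵀ = 1) (u : κ → R) :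
    u ⬝ᵥ u = ∑ i, (A i ⬝ᵥ u) ^ 2 := by
  calc u ⬝ᵥ u = (A *ᵥ u) ⬝ᵥ (A *ᵥ u) := by
        rw [dotProduct_mulVec, ← mulVec_transpose, mulVec_mulVec, mul_eq_one_comm.mp hA,
          one_mulVec]
    _ = ∑ i, (A i ⬝ᵥ u) ^ 2 := by simp only [dotProduct, sq]; rfl

theorem dotProduct_gram_mulVec (x : ι → R) (p : ι → κ → R) :
    x ⬝ᵥ (of (fun i j => p i ⬝ᵥ p j) *ᵥ x) = (∑ i, x i • p i) ⬝ᵥ (∑ i, x i • p i) := by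
  simp only [dot_mulVec_eq_sum_sum, of_apply, sum_dotProduct, dotProduct_sum, smul_dotProduct,
    dotProduct_smul, smul_eq_mul]
  rw [Finset.sum_comm]
  simp only [Finset.mul_sum]
  exact Finset.sum_congr rfl fun i _ => Finset.sum_congr rfl fun j _ => by
    rw [dotProduct_comm (p j)]; ring

theorem sqrt_weighted_dotProduct_mulVec [DecidableEq ι] {m : ι → ℝ} (hm : ∀ i, 0 ≤ m i)
    (q : ι → κ → ℝ) (M : ℝ) (J : Matrix ι ι ℝ)
    (hJ : ∀ i j, J i j = (if i = j then M else 0) - √(m i * m j) * (q i ⬝ᵥ q j)) (c : ι → ℝ) :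
    (fun i => √(m i) * c i) ⬝ᵥ (J *ᵥ fun i => √(m i) * c i) =
      M * ∑ i, m i * c i ^ 2 - (∑ i, (m i * c i) • q i) ⬝ᵥ (∑ i, (m i * c i) • q i) := by
  obtain ⟨s, hs, rfl⟩ : ∃ s : ι → ℝ, (∀ i, 0 ≤ s i) ∧ m = fun i => s i ^ 2 :=
    ⟨fun i => √(m i), fun i => Real.sqrt_nonneg _, funext fun i => (Real.sq_sqrt (hm i)).symm⟩
  have hJ_gram : J = M • 1 - of fun i j => (s i • q i) ⬝ᵥ (s j • q j) := by
    ext i j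
    rw [hJ, Real.sqrt_mul (sq_nonneg _), Real.sqrt_sq (hs i), Real.sqrt_sq (hs j)]
    simp only [Matrix.sub_apply, Matrix.smul_apply, one_apply, smul_eq_mul, mul_ite, mul_one,
      mul_zero, of_apply, smul_dotProduct, dotProduct_smul]
    ring
  simp only [Real.sqrt_sq (hs _)]
  rw [hJ_gram, sub_mulVec, dotProduct_sub, smul_mulVec, one_mulVec, dotProduct_smul,
    dotProduct_gram_mulVec]
  have hcoef : ∀ i, s i * c i * s i = s i ^ 2 * c i := fun i => by ring
  simp only [smul_smul, hcoef]
  congr 2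
  exact Finset.sum_congr rfl fun i _ => by ring

theorem smul_one_sub_sum_vecMulVec_mulVec [DecidableEq κ] (m : ι → R) (q : ι → κ → R) (M : R)
    (e : κ → R) :
    (M • (1 : Matrix κ κ R) - ∑ i, m i • vecMulVec (q i) (q i)) *ᵥ e =
      M • e - ∑ i, (m i * (q i ⬝ᵥ e)) • q i := by
  simp [sub_mulVec, sum_mulVec, smul_mulVec, vecMulVec_mulVec, mul_smul]

end

theorem dotProduct_self_eq_of_orthonormal {ex ey ez : Fin 3 → ℝ}
    (hx : ex ⬝ᵥ ex = 1) (hy : ey ⬝ᵥ ey = 1) (hz : ez ⬝ᵥ ez = 1)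
    (hxy : ex ⬝ᵥ ey = 0) (hyz : ey ⬝ᵥ ez = 0) (hzx : ez ⬝ᵥ ex = 0) (u : Fin 3 → ℝ) :
    u ⬝ᵥ u = (ex ⬝ᵥ u) ^ 2 + (ey ⬝ᵥ u) ^ 2 + (ez ⬝ᵥ u) ^ 2 := by
  have hA : of ![ex, ey, ez] * (of ![ex, ey, ez])ᵀ = 1 := by
    ext i j
    change ![ex, ey, ez] i ⬝ᵥ ![ex, ey, ez] j = _
    fin_cases i <;> fin_cases j <;>
      simp [one_apply, dotProduct_comm ey ex, dotProduct_comm ez ey, dotProduct_comm ex ez, *]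
  rw [dotProduct_self_eq_sum_sq_of_mul_transpose_eq_one hA, Fin.sum_univ_three]
  rfl

theorem stmt5_general (m : Fin 3 → ℝ) (hm : ∀ i, 0 < m i)
    (q : Fin 3 → Fin 3 → ℝ)
    (M : ℝ) (hM : M = ∑ i, m i)
    (I : Matrix (Fin 3) (Fin 3) ℝ)
    (hI : I = M • (1 : Matrix (Fin 3) (Fin 3) ℝ) - ∑ i, m i • vecMulVec (q i) (q i))
    (J : Matrix (Fin 3) (Fin 3) ℝ)
    (hJ : ∀ i j, J i j = (if i = j then M else 0) - Real.sqrt (m i * m j) * (q i ⬝ᵥ q j))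
    (ex ey ez : Fin 3 → ℝ)
    (hx : ex ⬝ᵥ ex = 1) (hy : ey ⬝ᵥ ey = 1) (hz : ez ⬝ᵥ ez = 1)
    (hxy : ex ⬝ᵥ ey = 0) (hyz : ey ⬝ᵥ ez = 0) (hzx : ez ⬝ᵥ ex = 0)
    (v : Fin 3 → ℝ) (hv : ∀ i, v i = Real.sqrt (m i) * (q i ⬝ᵥ ez)) :
    v ⬝ᵥ (J *ᵥ v) =
      (∑ i, m i * (q i ⬝ᵥ ez) ^ 2) * (∑ i, m i * (1 - (q i ⬝ᵥ ez) ^ 2))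
        - ((ex ⬝ᵥ (I *ᵥ ez)) ^ 2 + (ey ⬝ᵥ (I *ᵥ ez)) ^ 2) := by
  set w := ∑ i, (m i * (q i ⬝ᵥ ez)) • q i
  have hIz : I *ᵥ ez = M • ez - w := hI ▸ smul_one_sub_sum_vecMulVec_mulVec m q M ez
  have hzw : ez ⬝ᵥ w = ∑ i, m i * (q i ⬝ᵥ ez) ^ 2 := by
    refine (dotProduct_sum _ _ _).trans (Finset.sum_congr rfl fun i _ => ?_)
    rw [dotProduct_smul, dotProduct_comm, smul_eq_mul]
    ring
  rw [funext hv, sqrt_weighted_dotProduct_mulVec (fun i => (hm i).le) q M J hJ,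
    dotProduct_self_eq_of_orthonormal hx hy hz hxy hyz hzx w, hIz, dotProduct_sub, dotProduct_sub,
    dotProduct_smul, dotProduct_smul, dotProduct_comm ex ez, hzx, hyz, hzw, hM]
  simp only [mul_one_sub, Finset.sum_sub_distrib, smul_eq_mul, mul_zero, zero_sub]
  ring

/-- For an orthonormal basis `(e_x, e_y, e_z)` of `ℝ³` and the vector `v`
with `vᵢ = √(mᵢ)(qᵢ · e_z)`, the identity
`vᵀ J v = (∑ mₗ (qₗ·e_z)²)(∑ mₗ (1 − (qₗ·e_z)²)) − ((e_xᵀ I e_z)² + (e_yᵀ I e_z)²)`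
holds. -/
theorem stmt5 (m : Fin 3 → ℝ) (hm : ∀ i, 0 < m i)
    (q : Fin 3 → Fin 3 → ℝ) (hq : ∀ i, q i ⬝ᵥ q i = 1)
    (M : ℝ) (hM : M = ∑ i, m i)
    (I : Matrix (Fin 3) (Fin 3) ℝ)
    (hI : I = M • (1 : Matrix (Fin 3) (Fin 3) ℝ) - ∑ i, m i • vecMulVec (q i) (q i))
    (J : Matrix (Fin 3) (Fin 3) ℝ)
    (hJ : ∀ i j, J i j = (if i = j then M else 0) - Real.sqrt (m i * m j) * (q i ⬝ᵥ q j))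
    (ex ey ez : Fin 3 → ℝ)
    (hx : ex ⬝ᵥ ex = 1) (hy : ey ⬝ᵥ ey = 1) (hz : ez ⬝ᵥ ez = 1)
    (hxy : ex ⬝ᵥ ey = 0) (hyz : ey ⬝ᵥ ez = 0) (hzx : ez ⬝ᵥ ex = 0)
    (v : Fin 3 → ℝ) (hv : ∀ i, v i = Real.sqrt (m i) * (q i ⬝ᵥ ez)) :
    v ⬝ᵥ (J *ᵥ v) =
      (∑ i, m i * (q i ⬝ᵥ ez) ^ 2) * (∑ i, m i * (1 - (q i ⬝ᵥ ez) ^ 2))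
        - ((ex ⬝ᵥ (I *ᵥ ez)) ^ 2 + (ey ⬝ᵥ (I *ᵥ ez)) ^ 2) :=
  stmt5_general m hm q M hM I hI J hJ ex ey ez hx hy hz hxy hyz hzx v hv
end

section
/- (Equilateral relative equilibrium on a rotating meridian for arbitrary masses.) For any masses m₁, m₂, m₃ > 0 and any real number u, there exist θ₁, θ₂, θ₃ ∈ ℝ with θ₁ − θ₂ = θ₂ − θ₃ = 2π/3 and ω ∈ ℝ such that the equations (ω²/2) m_k sin(2θ_k) = ∑_{j≠k} m_k m_j sin(θ_k − θ_j) · u hold for k = 1,2,3. (Here u plays the role of U′(−1/2), since cos(θ_k − θ_j) = −1/2 for all pairs in such a configuration.) -/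
/-!
Put `θ₁, θ₂, θ₃ = φ/2 + a, φ/2, φ/2 - a` with `a = 2π/3`. All pairwise sines are `±sin a`, so
after cancelling `mₖ` the equations read `(ω²/2) sin(φ + 2a), (ω²/2) sin φ, (ω²/2) sin(φ - 2a) =
cₖ := u sin a (m_{k+1} - m_{k+2})`. Since `cos 2a = -1/2`, the left-hand sides always sum to zero,
as the `cₖ` do, so only two equations are independent, and these just ask for the polar form of a
point of the plane.
-/

open Real

lemma cos_two_pi_div_three : cos (2 * π / 3) = -1 / 2 := by
  rw [show 2 * π / 3 = π - π / 3 by ring, cos_pi_sub, cos_pi_div_three]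
  norm_num

lemma sin_two_mul_of_cos_eq_neg_half {a : ℝ} (ha : cos a = -1 / 2) : sin (2 * a) = -sin a := by
  rw [sin_two_mul, ha]
  ring

lemma cos_two_mul_of_cos_eq_neg_half {a : ℝ} (ha : cos a = -1 / 2) : cos (2 * a) = -1 / 2 := by
  rw [cos_two_mul, ha]
  norm_num

lemma sin_ne_zero_of_cos_eq_neg_half {b : ℝ} (hb : cos b = -1 / 2) : sin b ≠ 0 := by
  intro hs
  have := sin_sq_add_cos_sq b
  rw [hs, hb] at this
  norm_num at this

lemma exists_mul_sin_eq_of_add_eq_zero {b : ℝ} (hb : cos b = -1 / 2) {c₁ c₂ c₃ : ℝ}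
    (hc : c₁ + c₂ + c₃ = 0) :
    ∃ R φ : ℝ, 0 ≤ R ∧ R * sin (φ + b) = c₁ ∧ R * sin φ = c₂ ∧ R * sin (φ - b) = c₃ := by
  have hsb := sin_ne_zero_of_cos_eq_neg_half hb
  set z : ℂ := ⟨(c₁ + c₂ / 2) / sin b, c₂⟩
  have hcos : ‖z‖ * cos (Complex.arg z) * sin b = c₁ + c₂ / 2 := by
    rw [Complex.norm_mul_cos_arg z]
    exact div_mul_cancel₀ _ hsb
  have hsin : ‖z‖ * sin (Complex.arg z) = c₂ := Complex.norm_mul_sin_arg z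
  refine ⟨‖z‖, Complex.arg z, norm_nonneg z, ?_, hsin, ?_⟩
  · rw [sin_add, hb]
    linear_combination -1 / 2 * hsin + hcos
  · rw [sin_sub, hb]
    linear_combination -1 / 2 * hsin - hcos - hc

theorem stmt10_general (m1 m2 m3 : ℝ) (u : ℝ) :
    ∃ θ1 θ2 θ3 ω : ℝ,
      θ1 - θ2 = 2 * Real.pi / 3 ∧ θ2 - θ3 = 2 * Real.pi / 3 ∧
      (ω ^ 2 / 2) * m1 * Real.sin (2 * θ1)
        = m1 * m2 * Real.sin (θ1 - θ2) * u + m1 * m3 * Real.sin (θ1 - θ3) * u ∧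
      (ω ^ 2 / 2) * m2 * Real.sin (2 * θ2)
        = m2 * m1 * Real.sin (θ2 - θ1) * u + m2 * m3 * Real.sin (θ2 - θ3) * u ∧
      (ω ^ 2 / 2) * m3 * Real.sin (2 * θ3)
        = m3 * m1 * Real.sin (θ3 - θ1) * u + m3 * m2 * Real.sin (θ3 - θ2) * u := by
  set a := 2 * π / 3
  have ha : cos a = -1 / 2 := cos_two_pi_div_three
  have h2a : sin (2 * a) = -sin a := sin_two_mul_of_cos_eq_neg_half ha
  obtain ⟨R, φ, hR, h1, h2, h3⟩ :=
    exists_mul_sin_eq_of_add_eq_zero (cos_two_mul_of_cos_eq_neg_half ha)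
      (c₁ := u * sin a * (m2 - m3)) (c₂ := u * sin a * (m3 - m1)) (c₃ := u * sin a * (m1 - m2))
      (by ring)
  have hω : sqrt (2 * R) ^ 2 / 2 = R := by
    rw [sq_sqrt (by positivity)]
    ring
  refine ⟨φ / 2 + a, φ / 2, φ / 2 - a, sqrt (2 * R), by ring, by ring, ?_, ?_, ?_⟩
  · rw [hω, show 2 * (φ / 2 + a) = φ + 2 * a by ring, show φ / 2 + a - φ / 2 = a by ring,
      show φ / 2 + a - (φ / 2 - a) = 2 * a by ring, h2a]
    linear_combination m1 * h1
  · rw [hω, show 2 * (φ / 2) = φ by ring, show φ / 2 - (φ / 2 + a) = -a by ring,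
      show φ / 2 - (φ / 2 - a) = a by ring, sin_neg]
    linear_combination m2 * h2
  · rw [hω, show 2 * (φ / 2 - a) = φ - 2 * a by ring, show φ / 2 - a - (φ / 2 + a) = -(2 * a) by ring,
      show φ / 2 - a - φ / 2 = -a by ring, sin_neg, sin_neg, h2a]
    linear_combination m3 * h3

/-- (Equilateral relative equilibrium on a rotating meridian.)
For any positive masses `m₁, m₂, m₃` and any real `u` (the value of `U′(−1/2)`),
there exist angles with `θ₁ − θ₂ = θ₂ − θ₃ = 2π/3` and `ω ∈ ℝ` satisfying the
equations of motion `(ω²/2) mₖ sin(2θₖ) = ∑_{j≠k} mₖ mⱼ sin(θₖ − θⱼ) u`. -/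
theorem stmt10 (m1 m2 m3 : ℝ) (hm1 : 0 < m1) (hm2 : 0 < m2) (hm3 : 0 < m3) (u : ℝ) :
    ∃ θ1 θ2 θ3 ω : ℝ,
      θ1 - θ2 = 2 * Real.pi / 3 ∧ θ2 - θ3 = 2 * Real.pi / 3 ∧
      (ω ^ 2 / 2) * m1 * Real.sin (2 * θ1)
        = m1 * m2 * Real.sin (θ1 - θ2) * u + m1 * m3 * Real.sin (θ1 - θ3) * u ∧
      (ω ^ 2 / 2) * m2 * Real.sin (2 * θ2)
        = m2 * m1 * Real.sin (θ2 - θ1) * u + m2 * m3 * Real.sin (θ2 - θ3) * u ∧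
      (ω ^ 2 / 2) * m3 * Real.sin (2 * θ3)
        = m3 * m1 * Real.sin (θ3 - θ1) * u + m3 * m2 * Real.sin (θ3 - θ2) * u :=
  stmt10_general m1 m2 m3 u
end

section
/- (Attractive–repulsive duality for Euler relative equilibria.) Let U′ : ℝ → ℝ and suppose θ₁, θ₂, θ₃ ∈ ℝ and ω ∈ ℝ satisfy (ω²/2) m_k sin(2θ_k) = ∑_{j≠k} m_k m_j sin(θ_k − θ_j) U′(cos(θ_k − θ_j)) for k = 1,2,3. Then the shifted angles θ̃_k := θ_k + π/2 together with the same ω satisfy the corresponding equations with U′ replaced by −U′: (ω²/2) m_k sin(2θ̃_k) = ∑_{j≠k} m_k m_j sin(θ̃_k − θ̃_j) (−U′)(cos(θ̃_k − θ̃_j)) for k = 1,2,3. -/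
open Real

/-! Adding `π/2` to every angle leaves all differences `θₖ - θⱼ` unchanged and flips the sign
of every `sin (2 θₖ)`, so each equation of motion is negated on the left and is restored by
negating `U′` on the right. -/

theorem sin_two_mul_add_pi_div_two (θ : ℝ) : sin (2 * (θ + π / 2)) = -sin (2 * θ) := by
  rw [mul_add, mul_div_cancel₀ π two_ne_zero, sin_add_pi]

theorem meridian_equation_add_pi_div_two (U' : ℝ → ℝ) (ω m a b θ φ ψ : ℝ)
    (h : ω ^ 2 / 2 * m * sin (2 * θ)
      = a * sin (θ - φ) * U' (cos (θ - φ)) + b * sin (θ - ψ) * U' (cos (θ - ψ))) :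
    ω ^ 2 / 2 * m * sin (2 * (θ + π / 2))
      = a * sin ((θ + π / 2) - (φ + π / 2)) * -U' (cos ((θ + π / 2) - (φ + π / 2)))
        + b * sin ((θ + π / 2) - (ψ + π / 2)) * -U' (cos ((θ + π / 2) - (ψ + π / 2))) := by
  rw [sin_two_mul_add_pi_div_two, add_sub_add_right_eq_sub, add_sub_add_right_eq_sub]
  linarith

theorem stmt11_general (m1 m2 m3 : ℝ)
    (U' : ℝ → ℝ) (θ1 θ2 θ3 ω : ℝ)
    (h1 : (ω ^ 2 / 2) * m1 * Real.sin (2 * θ1)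
      = m1 * m2 * Real.sin (θ1 - θ2) * U' (Real.cos (θ1 - θ2))
        + m1 * m3 * Real.sin (θ1 - θ3) * U' (Real.cos (θ1 - θ3)))
    (h2 : (ω ^ 2 / 2) * m2 * Real.sin (2 * θ2)
      = m2 * m1 * Real.sin (θ2 - θ1) * U' (Real.cos (θ2 - θ1))
        + m2 * m3 * Real.sin (θ2 - θ3) * U' (Real.cos (θ2 - θ3)))
    (h3 : (ω ^ 2 / 2) * m3 * Real.sin (2 * θ3)
      = m3 * m1 * Real.sin (θ3 - θ1) * U' (Real.cos (θ3 - θ1))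
        + m3 * m2 * Real.sin (θ3 - θ2) * U' (Real.cos (θ3 - θ2))) :
    (ω ^ 2 / 2) * m1 * Real.sin (2 * (θ1 + Real.pi / 2))
      = m1 * m2 * Real.sin ((θ1 + Real.pi / 2) - (θ2 + Real.pi / 2))
          * (-(U' (Real.cos ((θ1 + Real.pi / 2) - (θ2 + Real.pi / 2)))))
        + m1 * m3 * Real.sin ((θ1 + Real.pi / 2) - (θ3 + Real.pi / 2))
          * (-(U' (Real.cos ((θ1 + Real.pi / 2) - (θ3 + Real.pi / 2))))) ∧
    (ω ^ 2 / 2) * m2 * Real.sin (2 * (θ2 + Real.pi / 2))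
      = m2 * m1 * Real.sin ((θ2 + Real.pi / 2) - (θ1 + Real.pi / 2))
          * (-(U' (Real.cos ((θ2 + Real.pi / 2) - (θ1 + Real.pi / 2)))))
        + m2 * m3 * Real.sin ((θ2 + Real.pi / 2) - (θ3 + Real.pi / 2))
          * (-(U' (Real.cos ((θ2 + Real.pi / 2) - (θ3 + Real.pi / 2))))) ∧
    (ω ^ 2 / 2) * m3 * Real.sin (2 * (θ3 + Real.pi / 2))
      = m3 * m1 * Real.sin ((θ3 + Real.pi / 2) - (θ1 + Real.pi / 2))
          * (-(U' (Real.cos ((θ3 + Real.pi / 2) - (θ1 + Real.pi / 2)))))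
        + m3 * m2 * Real.sin ((θ3 + Real.pi / 2) - (θ2 + Real.pi / 2))
          * (-(U' (Real.cos ((θ3 + Real.pi / 2) - (θ2 + Real.pi / 2))))) := by
  exact ⟨meridian_equation_add_pi_div_two U' ω m1 _ _ θ1 θ2 θ3 h1,
    meridian_equation_add_pi_div_two U' ω m2 _ _ θ2 θ1 θ3 h2,
    meridian_equation_add_pi_div_two U' ω m3 _ _ θ3 θ1 θ2 h3⟩

/-- (Attractive–repulsive duality for Euler relative equilibria.)
If `θ₁, θ₂, θ₃, ω` satisfy the meridian equations of motion for the potential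
derivative `U′`, then the shifted angles `θₖ + π/2` with the same `ω` satisfy them
for `−U′`. -/
theorem stmt11 (m1 m2 m3 : ℝ) (hm1 : 0 < m1) (hm2 : 0 < m2) (hm3 : 0 < m3)
    (U' : ℝ → ℝ) (θ1 θ2 θ3 ω : ℝ)
    (h1 : (ω ^ 2 / 2) * m1 * Real.sin (2 * θ1)
      = m1 * m2 * Real.sin (θ1 - θ2) * U' (Real.cos (θ1 - θ2))
        + m1 * m3 * Real.sin (θ1 - θ3) * U' (Real.cos (θ1 - θ3)))
    (h2 : (ω ^ 2 / 2) * m2 * Real.sin (2 * θ2)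
      = m2 * m1 * Real.sin (θ2 - θ1) * U' (Real.cos (θ2 - θ1))
        + m2 * m3 * Real.sin (θ2 - θ3) * U' (Real.cos (θ2 - θ3)))
    (h3 : (ω ^ 2 / 2) * m3 * Real.sin (2 * θ3)
      = m3 * m1 * Real.sin (θ3 - θ1) * U' (Real.cos (θ3 - θ1))
        + m3 * m2 * Real.sin (θ3 - θ2) * U' (Real.cos (θ3 - θ2))) :
    (ω ^ 2 / 2) * m1 * Real.sin (2 * (θ1 + Real.pi / 2))
      = m1 * m2 * Real.sin ((θ1 + Real.pi / 2) - (θ2 + Real.pi / 2))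
          * (-(U' (Real.cos ((θ1 + Real.pi / 2) - (θ2 + Real.pi / 2)))))
        + m1 * m3 * Real.sin ((θ1 + Real.pi / 2) - (θ3 + Real.pi / 2))
          * (-(U' (Real.cos ((θ1 + Real.pi / 2) - (θ3 + Real.pi / 2))))) ∧
    (ω ^ 2 / 2) * m2 * Real.sin (2 * (θ2 + Real.pi / 2))
      = m2 * m1 * Real.sin ((θ2 + Real.pi / 2) - (θ1 + Real.pi / 2))
          * (-(U' (Real.cos ((θ2 + Real.pi / 2) - (θ1 + Real.pi / 2)))))
        + m2 * m3 * Real.sin ((θ2 + Real.pi / 2) - (θ3 + Real.pi / 2))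
          * (-(U' (Real.cos ((θ2 + Real.pi / 2) - (θ3 + Real.pi / 2))))) ∧
    (ω ^ 2 / 2) * m3 * Real.sin (2 * (θ3 + Real.pi / 2))
      = m3 * m1 * Real.sin ((θ3 + Real.pi / 2) - (θ1 + Real.pi / 2))
          * (-(U' (Real.cos ((θ3 + Real.pi / 2) - (θ1 + Real.pi / 2)))))
        + m3 * m2 * Real.sin ((θ3 + Real.pi / 2) - (θ2 + Real.pi / 2))
          * (-(U' (Real.cos ((θ3 + Real.pi / 2) - (θ2 + Real.pi / 2))))) :=
  stmt11_general m1 m2 m3 U' θ1 θ2 θ3 ω h1 h2 h3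
end

section
/- (Necessary conditions for a Lagrange relative equilibrium.) Assume: (i) the three real numbers u₁₂, u₂₃, u₃₁ all have the same strict sign (all positive or all negative); (ii) the equations (P) hold; (iii) the principal-axis condition (A) holds; and (iv) the vectors q₁, q₂, q₃ are linearly independent (the configuration is not contained in a plane through the origin, i.e. it is non-collinear). Then sin(φ_i − φ_j) ≠ 0 for every pair i ≠ j, the chain u₁₂ cos θ₃ = u₂₃ cos θ₁ = u₃₁ cos θ₂ holds with common value different from 0, and cos θ₁, cos θ₂, cos θ₃ all have the same strict sign (all three bodies lie in one open hemisphere determined by the rotation axis). -/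
/-!
Write `sᵢ = sin θᵢ`, `cᵢ = cos θᵢ`, `Sᵢⱼ = sin (φᵢ - φⱼ)`. The sine parts of the principal-axis
condition balance the weights `mᵢ sᵢ cᵢ` against the `Sᵢⱼ` cyclically
(`m₃ s₃ c₃ S₂₃ = m₁ s₁ c₁ S₁₂`, ...); dividing by the equations (P) gives
`u₁₂ c₃ = u₂₃ c₁ = u₃₁ c₂` as soon as the common value `Γ` of (P) is nonzero.
Non-collinearity says `det (q₁, q₂, q₃) = -(s₁ s₂ c₃ S₁₂ + s₁ c₂ s₃ S₃₁ + c₁ s₂ s₃ S₂₃) ≠ 0`.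
This expression vanishes when all `Sᵢⱼ` vanish, which `Γ = 0` would force, and when all `cᵢ`
vanish, which a zero common value would force. The `cᵢ` then have the sign of the common value
divided by the equally signed `uᵢⱼ`.
-/

open Real

noncomputable def spherePoint (θ φ : ℝ) : Fin 3 → ℝ :=
  ![sin θ * cos φ, sin θ * sin φ, cos θ]

theorem det_spherePoints (θ1 θ2 θ3 φ1 φ2 φ3 : ℝ) :
    (Matrix.of ![spherePoint θ1 φ1, spherePoint θ2 φ2, spherePoint θ3 φ3]).det =
      -(sin θ1 * sin θ2 * cos θ3 * sin (φ1 - φ2) + sin θ1 * cos θ2 * sin θ3 * sin (φ3 - φ1)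
        + cos θ1 * sin θ2 * sin θ3 * sin (φ2 - φ3)) := by
  simp only [Matrix.det_fin_three, Matrix.of_apply, spherePoint, Matrix.cons_val_zero,
    Matrix.cons_val_one, Matrix.cons_val_two, Matrix.head_cons, Matrix.tail_cons, sin_sub]
  ring

theorem det_spherePoints_ne_zero {θ1 θ2 θ3 φ1 φ2 φ3 : ℝ}
    (h : LinearIndependent ℝ ![spherePoint θ1 φ1, spherePoint θ2 φ2, spherePoint θ3 φ3]) :
    sin θ1 * sin θ2 * cos θ3 * sin (φ1 - φ2) + sin θ1 * cos θ2 * sin θ3 * sin (φ3 - φ1)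
      + cos θ1 * sin θ2 * sin θ3 * sin (φ2 - φ3) ≠ 0 := by
  rw [← neg_ne_zero, ← det_spherePoints, ← isUnit_iff_ne_zero, ← Matrix.isUnit_iff_isUnit_det]
  exact Matrix.linearIndependent_rows_iff_isUnit.mp h

theorem principalAxis_sin_balance {a1 a2 a3 φ1 φ2 φ3 : ℝ}
    (h : ∀ φk ∈ ({φ1, φ2, φ3} : Set ℝ),
      a1 * sin (φk - φ1) + a2 * sin (φk - φ2) + a3 * sin (φk - φ3) = 0) :
    a2 * sin (φ1 - φ2) = a3 * sin (φ3 - φ1) ∧ a3 * sin (φ2 - φ3) = a1 * sin (φ1 - φ2) ∧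
      a1 * sin (φ3 - φ1) = a2 * sin (φ2 - φ3) := by
  have h1 := h φ1 (by simp)
  have h2 := h φ2 (by simp)
  have h3 := h φ3 (by simp)
  have antisymm (x y : ℝ) : sin (x - y) = -sin (y - x) := by rw [← sin_neg, neg_sub]
  simp only [sub_self, sin_zero, mul_zero, add_zero, zero_add] at h1 h2 h3
  refine ⟨?_, ?_, ?_⟩
  · linear_combination h1 - a3 * antisymm φ1 φ3
  · linear_combination h2 - a1 * antisymm φ2 φ1
  · linear_combination h3 - a2 * antisymm φ3 φ2

section Balance

variable {m1 m2 m3 s1 s2 s3 c1 c2 c3 S12 S23 S31 u12 u23 u31 : ℝ}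

theorem mul_cos_eq_of_balance
    (hP : m1 * m2 * u12 * s1 * s2 * S12 = m2 * m3 * u23 * s2 * s3 * S23)
    (hA : m3 * s3 * c3 * S23 = m1 * s1 * c1 * S12)
    (hΓ : m1 * m2 * u12 * s1 * s2 * S12 ≠ 0) :
    u12 * c3 = u23 * c1 := by
  refine mul_right_cancel₀ hΓ ?_
  linear_combination (u12 * c3) * hP + (u12 * u23 * m2 * s2) * hA

theorem balance_ne_zero_of_det_ne_zero
    (h12 : m1 * m2 * u12 * s1 * s2 ≠ 0) (h23 : m2 * m3 * u23 * s2 * s3 ≠ 0)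
    (h31 : m3 * m1 * u31 * s3 * s1 ≠ 0)
    (hP1 : m1 * m2 * u12 * s1 * s2 * S12 = m2 * m3 * u23 * s2 * s3 * S23)
    (hP2 : m2 * m3 * u23 * s2 * s3 * S23 = m3 * m1 * u31 * s3 * s1 * S31)
    (hD : s1 * s2 * c3 * S12 + s1 * c2 * s3 * S31 + c1 * s2 * s3 * S23 ≠ 0) :
    m1 * m2 * u12 * s1 * s2 * S12 ≠ 0 := by
  intro hΓ
  have hS12 : S12 = 0 := (mul_eq_zero.mp hΓ).resolve_left h12
  have hS23 : S23 = 0 := (mul_eq_zero.mp (hP1 ▸ hΓ)).resolve_left h23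
  have hS31 : S31 = 0 := (mul_eq_zero.mp (hP2 ▸ hP1 ▸ hΓ)).resolve_left h31
  exact hD (by rw [hS12, hS23, hS31]; ring)

theorem mul_cos_ne_zero_of_det_ne_zero (hu12 : u12 ≠ 0) (hu23 : u23 ≠ 0) (hu31 : u31 ≠ 0)
    (e1 : u12 * c3 = u23 * c1) (e2 : u23 * c1 = u31 * c2)
    (hD : s1 * s2 * c3 * S12 + s1 * c2 * s3 * S31 + c1 * s2 * s3 * S23 ≠ 0) :
    u12 * c3 ≠ 0 := by
  intro h0
  have hc3 : c3 = 0 := (mul_eq_zero.mp h0).resolve_left hu12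
  have hc1 : c1 = 0 := (mul_eq_zero.mp (e1 ▸ h0)).resolve_left hu23
  have hc2 : c2 = 0 := (mul_eq_zero.mp (e2 ▸ e1 ▸ h0)).resolve_left hu31
  exact hD (by rw [hc1, hc2, hc3]; ring)

end Balance

theorem same_sign_of_mul_eq {a b c x y z : ℝ}
    (habc : (0 < a ∧ 0 < b ∧ 0 < c) ∨ (a < 0 ∧ b < 0 ∧ c < 0))
    (h1 : a * z = b * x) (h2 : b * x = c * y) (h0 : a * z ≠ 0) :
    (0 < x ∧ 0 < y ∧ 0 < z) ∨ (x < 0 ∧ y < 0 ∧ z < 0) := by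
  wlog hpos : 0 < a ∧ 0 < b ∧ 0 < c generalizing a b c
  · obtain ⟨ha, hb, hc⟩ := habc.resolve_left hpos
    have hneg : 0 < -a ∧ 0 < -b ∧ 0 < -c := ⟨neg_pos.mpr ha, neg_pos.mpr hb, neg_pos.mpr hc⟩
    exact this (.inl hneg) (by linear_combination -h1) (by linear_combination -h2)
      (by simpa using h0) hneg
  obtain ⟨ha, hb, hc⟩ := hpos
  rcases h0.lt_or_gt with hneg | hpos
  · exact .inr ⟨neg_of_mul_neg_right (h1 ▸ hneg) hb.le,
      neg_of_mul_neg_right (h2 ▸ h1 ▸ hneg) hc.le, neg_of_mul_neg_right hneg ha.le⟩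
  · exact .inl ⟨pos_of_mul_pos_right (h1 ▸ hpos) hb.le,
      pos_of_mul_pos_right (h2 ▸ h1 ▸ hpos) hc.le, pos_of_mul_pos_right hpos ha.le⟩

/-- (Necessary conditions for a Lagrange relative equilibrium.)
If the `u_ij` all have the same strict sign, the equations (P) hold, the
principal-axis condition (A) holds, and the configuration is non-collinear
(the position vectors are linearly independent), then `sin(φᵢ − φⱼ) ≠ 0` for all
`i ≠ j`, the chain `u₁₂ cos θ₃ = u₂₃ cos θ₁ = u₃₁ cos θ₂` holds with common value
`≠ 0`, and `cos θ₁, cos θ₂, cos θ₃` all have the same strict sign. -/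
theorem stmt12 (m1 m2 m3 : ℝ) (hm1 : 0 < m1) (hm2 : 0 < m2) (hm3 : 0 < m3)
    (θ1 θ2 θ3 : ℝ) (hθ1 : θ1 ∈ Set.Ioo 0 Real.pi) (hθ2 : θ2 ∈ Set.Ioo 0 Real.pi)
    (hθ3 : θ3 ∈ Set.Ioo 0 Real.pi) (φ1 φ2 φ3 : ℝ)
    (u12 u23 u31 : ℝ)
    -- (i) the uᵢⱼ all have the same strict sign
    (husign : (0 < u12 ∧ 0 < u23 ∧ 0 < u31) ∨ (u12 < 0 ∧ u23 < 0 ∧ u31 < 0))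
    -- (ii) the equations (P)
    (hP1 : m1 * m2 * u12 * Real.sin θ1 * Real.sin θ2 * Real.sin (φ1 - φ2)
         = m2 * m3 * u23 * Real.sin θ2 * Real.sin θ3 * Real.sin (φ2 - φ3))
    (hP2 : m2 * m3 * u23 * Real.sin θ2 * Real.sin θ3 * Real.sin (φ2 - φ3)
         = m3 * m1 * u31 * Real.sin θ3 * Real.sin θ1 * Real.sin (φ3 - φ1))
    -- (iii) the principal-axis condition (A)
    (hA : ∀ φk ∈ ({φ1, φ2, φ3} : Set ℝ),
      m1 * Real.sin θ1 * Real.cos θ1 * Real.cos (φk - φ1)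
        + m2 * Real.sin θ2 * Real.cos θ2 * Real.cos (φk - φ2)
        + m3 * Real.sin θ3 * Real.cos θ3 * Real.cos (φk - φ3) = 0 ∧
      m1 * Real.sin θ1 * Real.cos θ1 * Real.sin (φk - φ1)
        + m2 * Real.sin θ2 * Real.cos θ2 * Real.sin (φk - φ2)
        + m3 * Real.sin θ3 * Real.cos θ3 * Real.sin (φk - φ3) = 0)
    -- (iv) the configuration is non-collinear
    (hind : LinearIndependent ℝ
      ![![Real.sin θ1 * Real.cos φ1, Real.sin θ1 * Real.sin φ1, Real.cos θ1],
        ![Real.sin θ2 * Real.cos φ2, Real.sin θ2 * Real.sin φ2, Real.cos θ2],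
        ![Real.sin θ3 * Real.cos φ3, Real.sin θ3 * Real.sin φ3, Real.cos θ3]]) :
    (Real.sin (φ1 - φ2) ≠ 0 ∧ Real.sin (φ2 - φ3) ≠ 0 ∧ Real.sin (φ3 - φ1) ≠ 0) ∧
    (u12 * Real.cos θ3 = u23 * Real.cos θ1 ∧ u23 * Real.cos θ1 = u31 * Real.cos θ2 ∧
      u12 * Real.cos θ3 ≠ 0) ∧
    ((0 < Real.cos θ1 ∧ 0 < Real.cos θ2 ∧ 0 < Real.cos θ3) ∨
      (Real.cos θ1 < 0 ∧ Real.cos θ2 < 0 ∧ Real.cos θ3 < 0)) := by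
  have hs1 : 0 < sin θ1 := sin_pos_of_pos_of_lt_pi hθ1.1 hθ1.2
  have hs2 : 0 < sin θ2 := sin_pos_of_pos_of_lt_pi hθ2.1 hθ2.2
  have hs3 : 0 < sin θ3 := sin_pos_of_pos_of_lt_pi hθ3.1 hθ3.2
  obtain ⟨hu12, hu23, hu31⟩ : u12 ≠ 0 ∧ u23 ≠ 0 ∧ u31 ≠ 0 := by
    rcases husign with ⟨h12, h23, h31⟩ | ⟨h12, h23, h31⟩
    exacts [⟨h12.ne', h23.ne', h31.ne'⟩, ⟨h12.ne, h23.ne, h31.ne⟩]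
  have hD := det_spherePoints_ne_zero hind
  obtain ⟨-, hA2, hA3⟩ := principalAxis_sin_balance fun φk hk ↦ (hA φk hk).2
  have hΓ1 := balance_ne_zero_of_det_ne_zero (by positivity) (by positivity) (by positivity)
    hP1 hP2 hD
  have hΓ2 := hP1 ▸ hΓ1
  have e1 := mul_cos_eq_of_balance hP1 hA2 hΓ1
  have e2 := mul_cos_eq_of_balance hP2 hA3 hΓ2
  have hne := mul_cos_ne_zero_of_det_ne_zero hu12 hu23 hu31 e1 e2 hD
  exact ⟨⟨right_ne_zero_of_mul hΓ1, right_ne_zero_of_mul hΓ2,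
    right_ne_zero_of_mul (hP2 ▸ hΓ2)⟩, ⟨e1, e2, hne⟩, same_sign_of_mul_eq husign e1 e2 hne⟩
end

section
/- (The Lagrange relations.) Assume: (i) cos θ_k ≠ 0 for k = 1,2,3; (ii) the chain u₁₂ cos θ₃ = u₂₃ cos θ₁ = u₃₁ cos θ₂ holds with common value different from 0; (iii) the principal-axis condition (A) holds; and (iv) the equations (T_i) hold for i = 1,2,3 with angular speed ω. Then u₁₂/(cos θ₁ cos θ₂) = u₂₃/(cos θ₂ cos θ₃) = u₃₁/(cos θ₃ cos θ₁) = ω²/(∑_{k=1}^{3} m_k cos² θ_k). -/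
/-!
The chain says `u_ij = λ cos θ_i cos θ_j` for a single `λ`. Substituting this into (T₁), the
cosine component of (A) at `k = 1` turns its right-hand side into
`λ m₁ sin θ₁ cos θ₁ ∑ mₖ cos² θₖ`, and cancelling `m₁ sin θ₁ cos θ₁` gives `ω² = λ ∑ mₖ cos² θₖ`.
-/

open Real

lemma div_mul_eq_div_mul_of_mul_eq {a b x y z : ℝ} (hx : x ≠ 0) (hy : y ≠ 0) (hz : z ≠ 0)
    (h : a * z = b * x) : a / (x * y) = b / (y * z) := by
  rw [div_eq_div_iff (mul_ne_zero hx hy) (mul_ne_zero hy hz)]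
  linear_combination y * h

lemma sq_mul_eq_of_chain_of_principal_axis
    {m1 m2 m3 s1 s2 s3 c1 c2 c3 k12 k13 u12 u31 ω : ℝ}
    (hm1 : m1 ≠ 0) (hs1 : s1 ≠ 0) (hc2 : c2 ≠ 0) (hch : u12 * c3 = u31 * c2)
    (hA : m1 * s1 * c1 + m2 * s2 * c2 * k12 + m3 * s3 * c3 * k13 = 0)
    (hT : ω ^ 2 * m1 * s1 * c1
      = m1 * m2 * u12 * (s1 * c2 - c1 * s2 * k12) + m1 * m3 * u31 * (s1 * c3 - c1 * s3 * k13)) :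
    ω ^ 2 * (c3 * c1) = u31 * (m1 * c1 ^ 2 + m2 * c2 ^ 2 + m3 * c3 ^ 2) := by
  apply mul_left_cancel₀ (mul_ne_zero (mul_ne_zero hm1 hs1) hc2)
  linear_combination c2 * c3 * hT + m1 * m2 * c2 * (s1 * c2 - c1 * s2 * k12) * hch
    - m1 * c1 * c2 * u31 * hA

theorem stmt13_general (m1 m2 m3 : ℝ) (hm1 : 0 < m1) (hm2 : 0 < m2) (hm3 : 0 < m3)
    (θ1 θ2 θ3 : ℝ) (hθ1 : θ1 ∈ Set.Ioo 0 Real.pi) (φ1 φ2 φ3 : ℝ) (u12 u23 u31 ω : ℝ)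
    -- (i) cos θₖ ≠ 0
    (hc1 : Real.cos θ1 ≠ 0) (hc2 : Real.cos θ2 ≠ 0) (hc3 : Real.cos θ3 ≠ 0)
    -- (ii) the chain with nonzero common value
    (hch1 : u12 * Real.cos θ3 = u23 * Real.cos θ1)
    (hch2 : u23 * Real.cos θ1 = u31 * Real.cos θ2)
    -- (iii) the principal-axis condition (A)
    (hA : ∀ φk ∈ ({φ1, φ2, φ3} : Set ℝ),
      m1 * Real.sin θ1 * Real.cos θ1 * Real.cos (φk - φ1)
        + m2 * Real.sin θ2 * Real.cos θ2 * Real.cos (φk - φ2)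
        + m3 * Real.sin θ3 * Real.cos θ3 * Real.cos (φk - φ3) = 0 ∧
      m1 * Real.sin θ1 * Real.cos θ1 * Real.sin (φk - φ1)
        + m2 * Real.sin θ2 * Real.cos θ2 * Real.sin (φk - φ2)
        + m3 * Real.sin θ3 * Real.cos θ3 * Real.sin (φk - φ3) = 0)
    -- (iv) the equations of motion (Tᵢ)
    (hT1 : ω ^ 2 * m1 * Real.sin θ1 * Real.cos θ1
      = m1 * m2 * u12 * (Real.sin θ1 * Real.cos θ2
          - Real.cos θ1 * Real.sin θ2 * Real.cos (φ1 - φ2))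
        + m1 * m3 * u31 * (Real.sin θ1 * Real.cos θ3
          - Real.cos θ1 * Real.sin θ3 * Real.cos (φ1 - φ3))) :
    u12 / (Real.cos θ1 * Real.cos θ2) = u23 / (Real.cos θ2 * Real.cos θ3) ∧
    u23 / (Real.cos θ2 * Real.cos θ3) = u31 / (Real.cos θ3 * Real.cos θ1) ∧
    u31 / (Real.cos θ3 * Real.cos θ1)
      = ω ^ 2 / (m1 * Real.cos θ1 ^ 2 + m2 * Real.cos θ2 ^ 2 + m3 * Real.cos θ3 ^ 2) := by
  have hs1 : sin θ1 ≠ 0 := (sin_pos_of_pos_of_lt_pi hθ1.1 hθ1.2).ne'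
  have hA1 := (hA φ1 (by simp)).1
  rw [sub_self, cos_zero, mul_one] at hA1
  have hM : 0 < m1 * cos θ1 ^ 2 + m2 * cos θ2 ^ 2 + m3 * cos θ3 ^ 2 := by positivity
  refine ⟨div_mul_eq_div_mul_of_mul_eq hc1 hc2 hc3 hch1,
    div_mul_eq_div_mul_of_mul_eq hc2 hc3 hc1 hch2, ?_⟩
  rw [div_eq_div_iff (mul_ne_zero hc3 hc1) hM.ne']
  exact (sq_mul_eq_of_chain_of_principal_axis hm1.ne' hs1 hc2 (hch1.trans hch2) hA1 hT1).symm

/-- (The Lagrange relations.) If `cos θₖ ≠ 0`, the chain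
`u₁₂ cos θ₃ = u₂₃ cos θ₁ = u₃₁ cos θ₂` holds with common value `≠ 0`, the
principal-axis condition (A) holds, and the equations of motion (Tᵢ) hold with
angular speed `ω`, then
`u₁₂/(cos θ₁ cos θ₂) = u₂₃/(cos θ₂ cos θ₃) = u₃₁/(cos θ₃ cos θ₁) = ω²/(∑ mₖ cos² θₖ)`. -/
theorem stmt13 (m1 m2 m3 : ℝ) (hm1 : 0 < m1) (hm2 : 0 < m2) (hm3 : 0 < m3)
    (θ1 θ2 θ3 : ℝ) (hθ1 : θ1 ∈ Set.Ioo 0 Real.pi) (hθ2 : θ2 ∈ Set.Ioo 0 Real.pi)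
    (hθ3 : θ3 ∈ Set.Ioo 0 Real.pi) (φ1 φ2 φ3 : ℝ) (u12 u23 u31 ω : ℝ)
    -- (i) cos θₖ ≠ 0
    (hc1 : Real.cos θ1 ≠ 0) (hc2 : Real.cos θ2 ≠ 0) (hc3 : Real.cos θ3 ≠ 0)
    -- (ii) the chain with nonzero common value
    (hch1 : u12 * Real.cos θ3 = u23 * Real.cos θ1)
    (hch2 : u23 * Real.cos θ1 = u31 * Real.cos θ2)
    (hch0 : u12 * Real.cos θ3 ≠ 0)
    -- (iii) the principal-axis condition (A)
    (hA : ∀ φk ∈ ({φ1, φ2, φ3} : Set ℝ),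
      m1 * Real.sin θ1 * Real.cos θ1 * Real.cos (φk - φ1)
        + m2 * Real.sin θ2 * Real.cos θ2 * Real.cos (φk - φ2)
        + m3 * Real.sin θ3 * Real.cos θ3 * Real.cos (φk - φ3) = 0 ∧
      m1 * Real.sin θ1 * Real.cos θ1 * Real.sin (φk - φ1)
        + m2 * Real.sin θ2 * Real.cos θ2 * Real.sin (φk - φ2)
        + m3 * Real.sin θ3 * Real.cos θ3 * Real.sin (φk - φ3) = 0)
    -- (iv) the equations of motion (Tᵢ)
    (hT1 : ω ^ 2 * m1 * Real.sin θ1 * Real.cos θ1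
      = m1 * m2 * u12 * (Real.sin θ1 * Real.cos θ2
          - Real.cos θ1 * Real.sin θ2 * Real.cos (φ1 - φ2))
        + m1 * m3 * u31 * (Real.sin θ1 * Real.cos θ3
          - Real.cos θ1 * Real.sin θ3 * Real.cos (φ1 - φ3)))
    (hT2 : ω ^ 2 * m2 * Real.sin θ2 * Real.cos θ2
      = m2 * m1 * u12 * (Real.sin θ2 * Real.cos θ1
          - Real.cos θ2 * Real.sin θ1 * Real.cos (φ2 - φ1))
        + m2 * m3 * u23 * (Real.sin θ2 * Real.cos θ3
          - Real.cos θ2 * Real.sin θ3 * Real.cos (φ2 - φ3)))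
    (hT3 : ω ^ 2 * m3 * Real.sin θ3 * Real.cos θ3
      = m3 * m1 * u31 * (Real.sin θ3 * Real.cos θ1
          - Real.cos θ3 * Real.sin θ1 * Real.cos (φ3 - φ1))
        + m3 * m2 * u23 * (Real.sin θ3 * Real.cos θ2
          - Real.cos θ3 * Real.sin θ2 * Real.cos (φ3 - φ2))) :
    u12 / (Real.cos θ1 * Real.cos θ2) = u23 / (Real.cos θ2 * Real.cos θ3) ∧
    u23 / (Real.cos θ2 * Real.cos θ3) = u31 / (Real.cos θ3 * Real.cos θ1) ∧
    u31 / (Real.cos θ3 * Real.cos θ1)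
      = ω ^ 2 / (m1 * Real.cos θ1 ^ 2 + m2 * Real.cos θ2 ^ 2 + m3 * Real.cos θ3 ^ 2) :=
  stmt13_general m1 m2 m3 hm1 hm2 hm3 θ1 θ2 θ3 hθ1 φ1 φ2 φ3 u12 u23 u31 ω hc1 hc2 hc3 hch1 hch2 hA
    hT1
end

section
/- (Sufficiency of the Lagrange relations.) Assume: (i) cos θ_k ≠ 0 for k = 1,2,3; (ii) the principal-axis condition (A) holds; and (iii) u_ij = ω² cos θ_i cos θ_j / (∑_{k=1}^{3} m_k cos² θ_k) for each pair (i,j) ∈ {(1,2),(2,3),(3,1)}. Then the equations of motion (T_i) for i = 1,2,3 and the equations (P) are satisfied, so the configuration is a relative equilibrium rotating about the z-axis with angular speed ω. -/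
/-!
With `λ := ω² / ∑ₖ mₖ cos² θₖ` the relations read `u_ij = λ cos θᵢ cos θⱼ`, so the force on
body `i` factors as `λ mᵢ cos θᵢ` times a sum over the bodies. In (Tᵢ) that sum is
`sin θᵢ ∑ⱼ mⱼ cos² θⱼ - cos θᵢ ∑ⱼ mⱼ sin θⱼ cos θⱼ cos (φᵢ - φⱼ)`, whose second part vanishes by
the cosine half of (A) at `φᵢ`; in (P), the azimuthal equation of body `i` is a multiple of the
sine half of (A) at `φᵢ`. The self-interaction terms `j = i` vanish, so the sums may run over
all bodies, and the argument works for any number of them.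
-/

open Real Finset

section LagrangeRelations

variable {ι : Type*} [Fintype ι] (m θ φ : ι → ℝ) (l : ℝ)

theorem lagrange_tangential_eq (i : ι)
    (hA : ∑ j, m j * sin (θ j) * cos (θ j) * cos (φ i - φ j) = 0) :
    l * (∑ j, m j * cos (θ j) ^ 2) * (m i * sin (θ i) * cos (θ i)) =
      ∑ j, m i * m j * (l * cos (θ i) * cos (θ j)) *
        (sin (θ i) * cos (θ j) - cos (θ i) * sin (θ j) * cos (φ i - φ j)) := by
  have hsplit : ∑ j, m i * m j * (l * cos (θ i) * cos (θ j)) *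
        (sin (θ i) * cos (θ j) - cos (θ i) * sin (θ j) * cos (φ i - φ j)) =
      l * m i * cos (θ i) * sin (θ i) * ∑ j, m j * cos (θ j) ^ 2 -
        l * m i * cos (θ i) ^ 2 * ∑ j, m j * sin (θ j) * cos (θ j) * cos (φ i - φ j) := by
    rw [mul_sum, mul_sum, ← sum_sub_distrib]
    exact sum_congr rfl fun j _ => by ring
  rw [hsplit, hA]
  ring

theorem lagrange_azimuthal_eq (i : ι)
    (hA : ∑ j, m j * sin (θ j) * cos (θ j) * sin (φ i - φ j) = 0) :
    ∑ j, m i * m j * (l * cos (θ i) * cos (θ j)) * sin (θ i) * sin (θ j) * sin (φ i - φ j) = 0 := by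
  have hfactor : ∑ j, m i * m j * (l * cos (θ i) * cos (θ j)) * sin (θ i) * sin (θ j) *
        sin (φ i - φ j) =
      l * m i * sin (θ i) * cos (θ i) * ∑ j, m j * sin (θ j) * cos (θ j) * sin (φ i - φ j) := by
    rw [mul_sum]
    exact sum_congr rfl fun j _ => by ring
  rw [hfactor, hA, mul_zero]

end LagrangeRelations

theorem stmt14_general (m1 m2 m3 : ℝ) (hm1 : 0 < m1) (hm2 : 0 < m2) (hm3 : 0 < m3)
    (θ1 θ2 θ3 : ℝ) (φ1 φ2 φ3 : ℝ) (u12 u23 u31 ω : ℝ)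
    -- (i) cos θₖ ≠ 0
    (hc1 : Real.cos θ1 ≠ 0) (hc2 : Real.cos θ2 ≠ 0) (hc3 : Real.cos θ3 ≠ 0)
    -- (ii) the principal-axis condition (A)
    (hA : ∀ φk ∈ ({φ1, φ2, φ3} : Set ℝ),
      m1 * Real.sin θ1 * Real.cos θ1 * Real.cos (φk - φ1)
        + m2 * Real.sin θ2 * Real.cos θ2 * Real.cos (φk - φ2)
        + m3 * Real.sin θ3 * Real.cos θ3 * Real.cos (φk - φ3) = 0 ∧
      m1 * Real.sin θ1 * Real.cos θ1 * Real.sin (φk - φ1)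
        + m2 * Real.sin θ2 * Real.cos θ2 * Real.sin (φk - φ2)
        + m3 * Real.sin θ3 * Real.cos θ3 * Real.sin (φk - φ3) = 0)
    -- (iii) the Lagrange relations
    (hu12 : u12 = ω ^ 2 * Real.cos θ1 * Real.cos θ2
      / (m1 * Real.cos θ1 ^ 2 + m2 * Real.cos θ2 ^ 2 + m3 * Real.cos θ3 ^ 2))
    (hu23 : u23 = ω ^ 2 * Real.cos θ2 * Real.cos θ3
      / (m1 * Real.cos θ1 ^ 2 + m2 * Real.cos θ2 ^ 2 + m3 * Real.cos θ3 ^ 2))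
    (hu31 : u31 = ω ^ 2 * Real.cos θ3 * Real.cos θ1
      / (m1 * Real.cos θ1 ^ 2 + m2 * Real.cos θ2 ^ 2 + m3 * Real.cos θ3 ^ 2)) :
    -- the equations of motion (Tᵢ)
    (ω ^ 2 * m1 * Real.sin θ1 * Real.cos θ1
      = m1 * m2 * u12 * (Real.sin θ1 * Real.cos θ2
          - Real.cos θ1 * Real.sin θ2 * Real.cos (φ1 - φ2))
        + m1 * m3 * u31 * (Real.sin θ1 * Real.cos θ3
          - Real.cos θ1 * Real.sin θ3 * Real.cos (φ1 - φ3))) ∧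
    (ω ^ 2 * m2 * Real.sin θ2 * Real.cos θ2
      = m2 * m1 * u12 * (Real.sin θ2 * Real.cos θ1
          - Real.cos θ2 * Real.sin θ1 * Real.cos (φ2 - φ1))
        + m2 * m3 * u23 * (Real.sin θ2 * Real.cos θ3
          - Real.cos θ2 * Real.sin θ3 * Real.cos (φ2 - φ3))) ∧
    (ω ^ 2 * m3 * Real.sin θ3 * Real.cos θ3
      = m3 * m1 * u31 * (Real.sin θ3 * Real.cos θ1
          - Real.cos θ3 * Real.sin θ1 * Real.cos (φ3 - φ1))
        + m3 * m2 * u23 * (Real.sin θ3 * Real.cos θ2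
          - Real.cos θ3 * Real.sin θ2 * Real.cos (φ3 - φ2))) ∧
    -- the equations (P)
    (m1 * m2 * u12 * Real.sin θ1 * Real.sin θ2 * Real.sin (φ1 - φ2)
      = m2 * m3 * u23 * Real.sin θ2 * Real.sin θ3 * Real.sin (φ2 - φ3)) ∧
    (m2 * m3 * u23 * Real.sin θ2 * Real.sin θ3 * Real.sin (φ2 - φ3)
      = m3 * m1 * u31 * Real.sin θ3 * Real.sin θ1 * Real.sin (φ3 - φ1)) := by
  have hS : m1 * cos θ1 ^ 2 + m2 * cos θ2 ^ 2 + m3 * cos θ3 ^ 2 ≠ 0 := by positivity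
  obtain ⟨l, hl⟩ : ∃ l, l = ω ^ 2 / (m1 * cos θ1 ^ 2 + m2 * cos θ2 ^ 2 + m3 * cos θ3 ^ 2) :=
    ⟨_, rfl⟩
  have hω : ω ^ 2 = l * (m1 * cos θ1 ^ 2 + m2 * cos θ2 ^ 2 + m3 * cos θ3 ^ 2) := by
    rw [hl, div_mul_cancel₀ _ hS]
  obtain rfl : u12 = l * cos θ1 * cos θ2 := by rw [hu12, hl]; ring
  obtain rfl : u23 = l * cos θ2 * cos θ3 := by rw [hu23, hl]; ring
  obtain rfl : u31 = l * cos θ3 * cos θ1 := by rw [hu31, hl]; ring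
  have hA_fin : ∀ i : Fin 3,
      (∑ j, ![m1, m2, m3] j * sin (![θ1, θ2, θ3] j) * cos (![θ1, θ2, θ3] j) *
        cos (![φ1, φ2, φ3] i - ![φ1, φ2, φ3] j) = 0) ∧
      ∑ j, ![m1, m2, m3] j * sin (![θ1, θ2, θ3] j) * cos (![θ1, θ2, θ3] j) *
        sin (![φ1, φ2, φ3] i - ![φ1, φ2, φ3] j) = 0 := by
    intro i
    have hmem : ![φ1, φ2, φ3] i ∈ ({φ1, φ2, φ3} : Set ℝ) := by fin_cases i <;> simp
    simpa [Fin.sum_univ_three] using hA _ hmem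
  have hT i := lagrange_tangential_eq ![m1, m2, m3] ![θ1, θ2, θ3] ![φ1, φ2, φ3] l i (hA_fin i).1
  have hP i := lagrange_azimuthal_eq ![m1, m2, m3] ![θ1, θ2, θ3] ![φ1, φ2, φ3] l i (hA_fin i).2
  simp only [Fin.forall_fin_succ, IsEmpty.forall_iff, and_true, Fin.sum_univ_three, Fin.isValue,
    Fin.succ_zero_eq_one, Fin.succ_one_eq_two, Matrix.cons_val_zero, Matrix.cons_val_one,
    Matrix.cons_val, sub_self, cos_zero, sin_zero, mul_one, mul_zero, zero_add, add_zero] at hT hP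
  obtain ⟨hT1, hT2, hT3⟩ := hT
  obtain ⟨-, hP2, hP3⟩ := hP
  have hsin_anti (a b : ℝ) : sin (a - b) = -sin (b - a) := by rw [← sin_neg, neg_sub]
  refine ⟨?_, ?_, ?_, ?_, ?_⟩
  · linear_combination hT1 + m1 * sin θ1 * cos θ1 * hω
  · linear_combination hT2 + m2 * sin θ2 * cos θ2 * hω
  · linear_combination hT3 + m3 * sin θ3 * cos θ3 * hω
  · linear_combination -hP2 + m1 * m2 * l * cos θ1 * cos θ2 * sin θ1 * sin θ2 * hsin_anti φ1 φ2
  · linear_combination -hP3 + m2 * m3 * l * cos θ2 * cos θ3 * sin θ2 * sin θ3 * hsin_anti φ2 φ3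

/-- (Sufficiency of the Lagrange relations.) If `cos θₖ ≠ 0`, the
principal-axis condition (A) holds, and
`u_ij = ω² cos θᵢ cos θⱼ / (∑ mₖ cos² θₖ)` for the three pairs, then the equations of
motion (Tᵢ) and the equations (P) are satisfied. -/
theorem stmt14 (m1 m2 m3 : ℝ) (hm1 : 0 < m1) (hm2 : 0 < m2) (hm3 : 0 < m3)
    (θ1 θ2 θ3 : ℝ) (hθ1 : θ1 ∈ Set.Ioo 0 Real.pi) (hθ2 : θ2 ∈ Set.Ioo 0 Real.pi)
    (hθ3 : θ3 ∈ Set.Ioo 0 Real.pi) (φ1 φ2 φ3 : ℝ) (u12 u23 u31 ω : ℝ)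
    -- (i) cos θₖ ≠ 0
    (hc1 : Real.cos θ1 ≠ 0) (hc2 : Real.cos θ2 ≠ 0) (hc3 : Real.cos θ3 ≠ 0)
    -- (ii) the principal-axis condition (A)
    (hA : ∀ φk ∈ ({φ1, φ2, φ3} : Set ℝ),
      m1 * Real.sin θ1 * Real.cos θ1 * Real.cos (φk - φ1)
        + m2 * Real.sin θ2 * Real.cos θ2 * Real.cos (φk - φ2)
        + m3 * Real.sin θ3 * Real.cos θ3 * Real.cos (φk - φ3) = 0 ∧
      m1 * Real.sin θ1 * Real.cos θ1 * Real.sin (φk - φ1)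
        + m2 * Real.sin θ2 * Real.cos θ2 * Real.sin (φk - φ2)
        + m3 * Real.sin θ3 * Real.cos θ3 * Real.sin (φk - φ3) = 0)
    -- (iii) the Lagrange relations
    (hu12 : u12 = ω ^ 2 * Real.cos θ1 * Real.cos θ2
      / (m1 * Real.cos θ1 ^ 2 + m2 * Real.cos θ2 ^ 2 + m3 * Real.cos θ3 ^ 2))
    (hu23 : u23 = ω ^ 2 * Real.cos θ2 * Real.cos θ3
      / (m1 * Real.cos θ1 ^ 2 + m2 * Real.cos θ2 ^ 2 + m3 * Real.cos θ3 ^ 2))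
    (hu31 : u31 = ω ^ 2 * Real.cos θ3 * Real.cos θ1
      / (m1 * Real.cos θ1 ^ 2 + m2 * Real.cos θ2 ^ 2 + m3 * Real.cos θ3 ^ 2)) :
    -- the equations of motion (Tᵢ)
    (ω ^ 2 * m1 * Real.sin θ1 * Real.cos θ1
      = m1 * m2 * u12 * (Real.sin θ1 * Real.cos θ2
          - Real.cos θ1 * Real.sin θ2 * Real.cos (φ1 - φ2))
        + m1 * m3 * u31 * (Real.sin θ1 * Real.cos θ3
          - Real.cos θ1 * Real.sin θ3 * Real.cos (φ1 - φ3))) ∧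
    (ω ^ 2 * m2 * Real.sin θ2 * Real.cos θ2
      = m2 * m1 * u12 * (Real.sin θ2 * Real.cos θ1
          - Real.cos θ2 * Real.sin θ1 * Real.cos (φ2 - φ1))
        + m2 * m3 * u23 * (Real.sin θ2 * Real.cos θ3
          - Real.cos θ2 * Real.sin θ3 * Real.cos (φ2 - φ3))) ∧
    (ω ^ 2 * m3 * Real.sin θ3 * Real.cos θ3
      = m3 * m1 * u31 * (Real.sin θ3 * Real.cos θ1
          - Real.cos θ3 * Real.sin θ1 * Real.cos (φ3 - φ1))
        + m3 * m2 * u23 * (Real.sin θ3 * Real.cos θ2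
          - Real.cos θ3 * Real.sin θ2 * Real.cos (φ3 - φ2))) ∧
    -- the equations (P)
    (m1 * m2 * u12 * Real.sin θ1 * Real.sin θ2 * Real.sin (φ1 - φ2)
      = m2 * m3 * u23 * Real.sin θ2 * Real.sin θ3 * Real.sin (φ2 - φ3)) ∧
    (m2 * m3 * u23 * Real.sin θ2 * Real.sin θ3 * Real.sin (φ2 - φ3)
      = m3 * m1 * u31 * Real.sin θ3 * Real.sin θ1 * Real.sin (φ3 - φ1)) :=
  stmt14_general m1 m2 m3 hm1 hm2 hm3 θ1 θ2 θ3 φ1 φ2 φ3 u12 u23 u31 ω hc1 hc2 hc3 hA hu12 hu23 hu31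
end

section
/- (The eigenvector associated with a Lagrange relative equilibrium.) Let u₁₂, u₂₃, u₃₁ be nonzero reals, let e ∈ ℝ³ be a unit vector with I e = λ e, write cos θ_k := (q_k · e), and suppose there is δ ≠ 0 with u₂₃ cos θ₁ = u₃₁ cos θ₂ = u₁₂ cos θ₃ = δ. Then the vector w := (√(m₁)/u₂₃, √(m₂)/u₃₁, √(m₃)/u₁₂)ᵀ satisfies J w = λ w; i.e. w is an eigenvector of J with the same eigenvalue λ. -/
/-!
Let `A` be the matrix with rows `√mᵢ qᵢ`. Then `I = M - AᵀA` and `J = M - AAᵀ`, and `A` carries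
eigenvectors of `M - AᵀA` to eigenvectors of `M - AAᵀ` with the same eigenvalue. The vector
`A e = (√mᵢ cos θᵢ)ᵢ` is `δ w`, since `cos θ₁ = δ / u₂₃`, `cos θ₂ = δ / u₃₁`, `cos θ₃ = δ / u₁₂`.
-/

open Matrix

section

variable {ι κ R : Type*} [CommRing R]

theorem Matrix.sub_mul_mulVec_mulVec_eq_smul
    [Fintype ι] [Fintype κ] [DecidableEq ι] [DecidableEq κ]
    {A : Matrix ι κ R} {B : Matrix κ ι R} {c lam : R} {e : κ → R}
    (h : (c • 1 - B * A) *ᵥ e = lam • e) :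
    (c • 1 - A * B) *ᵥ (A *ᵥ e) = lam • (A *ᵥ e) :=
  calc (c • 1 - A * B) *ᵥ (A *ᵥ e) = A *ᵥ ((c • 1 - B * A) *ᵥ e) := by
        simp only [mulVec_mulVec, Matrix.sub_mul, Matrix.mul_sub, Matrix.smul_mul,
          Matrix.mul_smul, Matrix.one_mul, Matrix.mul_one, Matrix.mul_assoc]
    _ = lam • (A *ᵥ e) := by rw [h, mulVec_smul]

theorem Matrix.transpose_of_mul_of [Fintype ι] (v : ι → κ → R) :
    (of v)ᵀ * of v = ∑ i, vecMulVec (v i) (v i) := by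
  ext a b
  simp only [mul_apply, transpose_apply, of_apply, sum_apply, vecMulVec_apply]

theorem Matrix.of_mul_transpose_of_apply [Fintype κ] (v : ι → κ → R) (i j : ι) :
    (of v * (of v)ᵀ) i j = v i ⬝ᵥ v j :=
  rfl

end

theorem stmt15_general (m : Fin 3 → ℝ) (hm : ∀ i, 0 < m i)
    (q : Fin 3 → Fin 3 → ℝ)
    (M : ℝ)
    (I : Matrix (Fin 3) (Fin 3) ℝ)
    (hI : I = M • (1 : Matrix (Fin 3) (Fin 3) ℝ) - ∑ i, m i • vecMulVec (q i) (q i))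
    (J : Matrix (Fin 3) (Fin 3) ℝ)
    (hJ : ∀ i j, J i j = (if i = j then M else 0) - Real.sqrt (m i * m j) * (q i ⬝ᵥ q j))
    (u12 u23 u31 : ℝ) (hu12 : u12 ≠ 0) (hu23 : u23 ≠ 0) (hu31 : u31 ≠ 0)
    (lam : ℝ) (e : Fin 3 → ℝ) (heig : I *ᵥ e = lam • e)
    (δ : ℝ) (hδ : δ ≠ 0)
    (h1 : u23 * (q 0 ⬝ᵥ e) = δ) (h2 : u31 * (q 1 ⬝ᵥ e) = δ)
    (h3 : u12 * (q 2 ⬝ᵥ e) = δ)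
    (w : Fin 3 → ℝ)
    (hw : w = ![Real.sqrt (m 0) / u23, Real.sqrt (m 1) / u31, Real.sqrt (m 2) / u12]) :
    J *ᵥ w = lam • w := by
  set A := of fun i => √(m i) • q i
  have hIA : I = M • 1 - Aᵀ * A := by
    simp only [hI, A, transpose_of_mul_of, smul_vecMulVec, vecMulVec_smul, smul_smul,
      Real.mul_self_sqrt (hm _).le]
  have hJA : J = M • 1 - A * Aᵀ := by
    ext i j
    rw [hJ, Matrix.sub_apply, of_mul_transpose_of_apply, smul_dotProduct, dotProduct_smul,
      Real.sqrt_mul (hm i).le]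
    simp [one_apply, mul_assoc]
  have hwA : w = δ⁻¹ • (A *ᵥ e) := by
    have hAe : ∀ i, (A *ᵥ e) i = √(m i) * (q i ⬝ᵥ e) :=
      fun i => smul_dotProduct (√(m i)) (q i) e
    have hc1 : q 0 ⬝ᵥ e = δ / u23 := eq_div_of_mul_eq hu23 (by rw [mul_comm, h1])
    have hc2 : q 1 ⬝ᵥ e = δ / u31 := eq_div_of_mul_eq hu31 (by rw [mul_comm, h2])
    have hc3 : q 2 ⬝ᵥ e = δ / u12 := eq_div_of_mul_eq hu12 (by rw [mul_comm, h3])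
    ext i
    fin_cases i <;>
      simp only [hw, hAe, hc1, hc2, hc3, Pi.smul_apply, smul_eq_mul, Fin.isValue, Fin.zero_eta,
        Fin.mk_one, Fin.reduceFinMk, cons_val] <;> field_simp
  rw [hwA, mulVec_smul, hJA, sub_mul_mulVec_mulVec_eq_smul (hIA ▸ heig), smul_comm]

/-- (The eigenvector associated with a Lagrange relative equilibrium.)
If `e` is a unit eigenvector of the inertia tensor `I` with eigenvalue `λ`,
`cos θₖ := qₖ · e`, and `u₂₃ cos θ₁ = u₃₁ cos θ₂ = u₁₂ cos θ₃ = δ ≠ 0`, then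
`w = (√m₁/u₂₃, √m₂/u₃₁, √m₃/u₁₂)ᵀ` satisfies `J w = λ w`. -/
theorem stmt15 (m : Fin 3 → ℝ) (hm : ∀ i, 0 < m i)
    (q : Fin 3 → Fin 3 → ℝ) (hq : ∀ i, q i ⬝ᵥ q i = 1)
    (M : ℝ) (hM : M = ∑ i, m i)
    (I : Matrix (Fin 3) (Fin 3) ℝ)
    (hI : I = M • (1 : Matrix (Fin 3) (Fin 3) ℝ) - ∑ i, m i • vecMulVec (q i) (q i))
    (J : Matrix (Fin 3) (Fin 3) ℝ)
    (hJ : ∀ i j, J i j = (if i = j then M else 0) - Real.sqrt (m i * m j) * (q i ⬝ᵥ q j))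
    (u12 u23 u31 : ℝ) (hu12 : u12 ≠ 0) (hu23 : u23 ≠ 0) (hu31 : u31 ≠ 0)
    (lam : ℝ) (e : Fin 3 → ℝ) (he : e ⬝ᵥ e = 1) (heig : I *ᵥ e = lam • e)
    (δ : ℝ) (hδ : δ ≠ 0)
    (h1 : u23 * (q 0 ⬝ᵥ e) = δ) (h2 : u31 * (q 1 ⬝ᵥ e) = δ)
    (h3 : u12 * (q 2 ⬝ᵥ e) = δ)
    (w : Fin 3 → ℝ)
    (hw : w = ![Real.sqrt (m 0) / u23, Real.sqrt (m 1) / u31, Real.sqrt (m 2) / u12]) :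
    J *ᵥ w = lam • w :=
  stmt15_general m hm q M I hI J hJ u12 u23 u31 hu12 hu23 hu31 lam e heig δ hδ h1 h2 h3 w hw
end

section
/- (Angular velocity of a Lagrange relative equilibrium.) Let m₁, m₂, m₃ > 0, let u₁₂, u₂₃, u₃₁ be nonzero reals, and suppose c₁, c₂, c₃ are nonzero reals (playing the role of cos θ_k) and ω ∈ ℝ satisfy u_ij = ω² c_i c_j / (∑_{k=1}^{3} m_k c_k²) for each pair (i,j) ∈ {(1,2),(2,3),(3,1)}. Then ω² = u₁₂ u₂₃ u₃₁ · (m₁/u₂₃² + m₂/u₃₁² + m₃/u₁₂²). -/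
/-!
Writing `S = ∑ mₖ cₖ²` and `k = ω² / S`, the hypotheses say `u_ij = k cᵢ cⱼ`. Then
`u₁₂ u₂₃ u₃₁ / u₂₃² = k c₁²` and cyclically, so the right-hand side is `k S = ω²`.
-/

theorem cyclic_product_mul_sum_div_sq {K : Type*} [Field K] (m1 m2 m3 k c1 c2 c3 : K)
    (hk : k ≠ 0) (hc1 : c1 ≠ 0) (hc2 : c2 ≠ 0) (hc3 : c3 ≠ 0) :
    k * c1 * c2 * (k * c2 * c3) * (k * c3 * c1) *
        (m1 / (k * c2 * c3) ^ 2 + m2 / (k * c3 * c1) ^ 2 + m3 / (k * c1 * c2) ^ 2) =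
      k * (m1 * c1 ^ 2 + m2 * c2 ^ 2 + m3 * c3 ^ 2) := by
  field_simp

theorem stmt16_general (m1 m2 m3 : ℝ)
    (u12 u23 u31 : ℝ) (hu12 : u12 ≠ 0)
    (c1 c2 c3 ω : ℝ) (hc1 : c1 ≠ 0) (hc2 : c2 ≠ 0) (hc3 : c3 ≠ 0)
    (h12 : u12 = ω ^ 2 * c1 * c2 / (m1 * c1 ^ 2 + m2 * c2 ^ 2 + m3 * c3 ^ 2))
    (h23 : u23 = ω ^ 2 * c2 * c3 / (m1 * c1 ^ 2 + m2 * c2 ^ 2 + m3 * c3 ^ 2))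
    (h31 : u31 = ω ^ 2 * c3 * c1 / (m1 * c1 ^ 2 + m2 * c2 ^ 2 + m3 * c3 ^ 2)) :
    ω ^ 2 = u12 * u23 * u31 * (m1 / u23 ^ 2 + m2 / u31 ^ 2 + m3 / u12 ^ 2) := by
  set S := m1 * c1 ^ 2 + m2 * c2 ^ 2 + m3 * c3 ^ 2
  have scaled (a b : ℝ) : ω ^ 2 * a * b / S = ω ^ 2 / S * a * b := by ring
  have hk : ω ^ 2 / S ≠ 0 := by
    intro hk
    apply hu12
    rw [h12, scaled, hk, zero_mul, zero_mul]
  have hS : S ≠ 0 := (div_ne_zero_iff.mp hk).2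
  rw [h12, h23, h31, scaled, scaled, scaled,
    cyclic_product_mul_sum_div_sq m1 m2 m3 _ c1 c2 c3 hk hc1 hc2 hc3, div_mul_cancel₀ _ hS]

/-- (Angular velocity of a Lagrange relative equilibrium.)
If nonzero `c₁, c₂, c₃` and `ω` satisfy `u_ij = ω² cᵢ cⱼ / (∑ mₖ cₖ²)` for the three
pairs, then `ω² = u₁₂ u₂₃ u₃₁ (m₁/u₂₃² + m₂/u₃₁² + m₃/u₁₂²)`. -/
theorem stmt16 (m1 m2 m3 : ℝ) (hm1 : 0 < m1) (hm2 : 0 < m2) (hm3 : 0 < m3)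
    (u12 u23 u31 : ℝ) (hu12 : u12 ≠ 0) (hu23 : u23 ≠ 0) (hu31 : u31 ≠ 0)
    (c1 c2 c3 ω : ℝ) (hc1 : c1 ≠ 0) (hc2 : c2 ≠ 0) (hc3 : c3 ≠ 0)
    (h12 : u12 = ω ^ 2 * c1 * c2 / (m1 * c1 ^ 2 + m2 * c2 ^ 2 + m3 * c3 ^ 2))
    (h23 : u23 = ω ^ 2 * c2 * c3 / (m1 * c1 ^ 2 + m2 * c2 ^ 2 + m3 * c3 ^ 2))
    (h31 : u31 = ω ^ 2 * c3 * c1 / (m1 * c1 ^ 2 + m2 * c2 ^ 2 + m3 * c3 ^ 2)) :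
    ω ^ 2 = u12 * u23 * u31 * (m1 / u23 ^ 2 + m2 / u31 ^ 2 + m3 / u12 ^ 2) :=
  stmt16_general m1 m2 m3 u12 u23 u31 hu12 c1 c2 c3 ω hc1 hc2 hc3 h12 h23 h31
end

section
/- (Sufficient condition on the shape for a Lagrange relative equilibrium.) Let u₁₂, u₂₃, u₃₁ > 0, set N = √(m₁/u₂₃² + m₂/u₃₁² + m₃/u₁₂²) and Ψ_L = (√(m₁)/u₂₃, √(m₂)/u₃₁, √(m₃)/u₁₂)ᵀ / N. Suppose J Ψ_L = λ Ψ_L for some λ < M. Then there exists a unit vector e ∈ ℝ³ with I e = λ e such that the numbers c_k := (q_k · e) satisfy c₁ = √(M−λ)/(u₂₃ N), c₂ = √(M−λ)/(u₃₁ N), c₃ = √(M−λ)/(u₁₂ N), and, with ω² := u₁₂ u₂₃ u₃₁ (m₁/u₂₃² + m₂/u₃₁² + m₃/u₁₂²) > 0, the Lagrange relations u_ij = ω² c_i c_j / (∑_{k=1}^{3} m_k c_k²) hold for each pair (i,j) ∈ {(1,2),(2,3),(3,1)}. -/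
/-!
Let `A` be the matrix with columns `√mₖ qₖ`. Then `I = M - A Aᵀ` and `J = M - Aᵀ A`, so `A`
maps a unit eigenvector `ψ` of `J` for `λ < M` to an eigenvector of `I` for `λ` of squared
length `M - λ`, and `Aᵀ (A ψ) = (M - λ) ψ` reads `√mₖ (qₖ · e) = √(M - λ) ψₖ` for the
normalisation `e = A ψ / √(M - λ)`. For `ψ = Ψ_L` this gives `cₖ = √(M - λ) / (uₖ N)`, hence
`∑ mₖ cₖ² = M - λ`, and the Lagrange relations become an identity in the `u`'s.
-/

open Matrix

namespace Matrix

variable {R : Type*} {n ι : Type*}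

section CommRing

variable [CommRing R]

theorem smul_one_sub_mulVec [Fintype n] [DecidableEq n] (c : R) (B : Matrix n n R) (v : n → R) :
    (c • 1 - B) *ᵥ v = c • v - B *ᵥ v := by
  rw [sub_mulVec, smul_mulVec, one_mulVec]

theorem mulVec_eq_sub_smul_of_smul_one_sub_mulVec_eq [Fintype n] [DecidableEq n] {c μ : R}
    {B : Matrix n n R} {v : n → R} (h : (c • 1 - B) *ᵥ v = μ • v) :
    B *ᵥ v = (c - μ) • v := by
  rw [smul_one_sub_mulVec] at h
  rw [sub_smul, ← h, sub_sub_cancel]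

theorem mul_transpose_mulVec_mulVec_of_transpose_mul_mulVec [Fintype n] [Fintype ι]
    (A : Matrix n ι R) {ψ : ι → R} {μ : R} (h : (Aᵀ * A) *ᵥ ψ = μ • ψ) :
    (A * Aᵀ) *ᵥ (A *ᵥ ψ) = μ • (A *ᵥ ψ) := by
  rw [← mulVec_mulVec, mulVec_mulVec _ Aᵀ A, h, mulVec_smul]

theorem mulVec_dotProduct_mulVec_self [Fintype n] [Fintype ι] (A : Matrix n ι R) (ψ : ι → R) :
    (A *ᵥ ψ) ⬝ᵥ (A *ᵥ ψ) = ψ ⬝ᵥ ((Aᵀ * A) *ᵥ ψ) := by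
  rw [dotProduct_mulVec, ← mulVec_transpose, mulVec_mulVec, dotProduct_comm]

def weightedCols (s : ι → R) (q : ι → n → R) : Matrix n ι R :=
  of fun x k => s k * q k x

variable (s : ι → R) (q : ι → n → R)

theorem weightedCols_mul_transpose [Fintype ι] :
    weightedCols s q * (weightedCols s q)ᵀ = ∑ k, (s k * s k) • vecMulVec (q k) (q k) := by
  ext x y
  simp only [weightedCols, mul_apply, transpose_apply, of_apply, sum_apply, smul_apply,
    vecMulVec_apply, smul_eq_mul]
  exact Finset.sum_congr rfl fun k _ => by ring

theorem transpose_weightedCols_mulVec_apply [Fintype n] (v : n → R) (k : ι) :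
    ((weightedCols s q)ᵀ *ᵥ v) k = s k * (q k ⬝ᵥ v) := by
  simp only [weightedCols, mulVec, dotProduct, transpose_apply, of_apply, Finset.mul_sum,
    mul_assoc]

theorem transpose_weightedCols_mul_apply [Fintype n] (i j : ι) :
    ((weightedCols s q)ᵀ * weightedCols s q) i j = s i * s j * (q i ⬝ᵥ q j) := by
  simp only [weightedCols, mul_apply, dotProduct, transpose_apply, of_apply, Finset.mul_sum]
  exact Finset.sum_congr rfl fun x _ => by ring

end CommRing

theorem exists_unit_mul_transpose_eigenvector [Fintype n] [Fintype ι] (A : Matrix n ι ℝ)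
    {ψ : ι → ℝ} {μ : ℝ} (hψ : ψ ⬝ᵥ ψ = 1) (h : (Aᵀ * A) *ᵥ ψ = μ • ψ) (hμ : 0 < μ) :
    ∃ e : n → ℝ, e ⬝ᵥ e = 1 ∧ (A * Aᵀ) *ᵥ e = μ • e ∧ Aᵀ *ᵥ e = √μ • ψ := by
  have hsq : √μ ^ 2 = μ := Real.sq_sqrt hμ.le
  have hne : √μ ≠ 0 := (Real.sqrt_pos.mpr hμ).ne'
  refine ⟨(√μ)⁻¹ • A *ᵥ ψ, ?_, ?_, ?_⟩
  · rw [smul_dotProduct, dotProduct_smul, mulVec_dotProduct_mulVec_self, h, dotProduct_smul, hψ]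
    simp only [smul_eq_mul, mul_one]
    rw [← mul_assoc, ← mul_inv, ← sq, hsq, inv_mul_cancel₀ hμ.ne']
  · rw [mulVec_smul, mul_transpose_mulVec_mulVec_of_transpose_mul_mulVec A h, smul_comm]
  · rw [mulVec_smul, mulVec_mulVec, h, smul_smul]
    congr 1
    rw [inv_mul_eq_iff_eq_mul₀ hne, ← sq, hsq]

end Matrix

section Inertia

variable {ι n : Type*} (m : ι → ℝ) (q : ι → n → ℝ) (M : ℝ)

def inertiaTensor [Fintype ι] [DecidableEq n] : Matrix n n ℝ :=
  M • 1 - ∑ k, m k • vecMulVec (q k) (q k)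

noncomputable def inertiaTensorDual [Fintype n] [DecidableEq ι] : Matrix ι ι ℝ :=
  of fun i j => (if i = j then M else 0) - √(m i * m j) * (q i ⬝ᵥ q j)

variable {m}

theorem inertiaTensor_eq [Fintype ι] [DecidableEq n] (hm : ∀ k, 0 ≤ m k) :
    inertiaTensor m q M =
      M • 1 - weightedCols (fun k => √(m k)) q * (weightedCols (fun k => √(m k)) q)ᵀ := by
  simp only [inertiaTensor, weightedCols_mul_transpose, Real.mul_self_sqrt (hm _)]

theorem inertiaTensorDual_eq [Fintype n] [DecidableEq ι] (hm : ∀ k, 0 ≤ m k) :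
    inertiaTensorDual m q M =
      M • 1 - (weightedCols (fun k => √(m k)) q)ᵀ * weightedCols (fun k => √(m k)) q := by
  ext i j
  rw [Matrix.sub_apply, Matrix.smul_apply, one_apply, transpose_weightedCols_mul_apply,
    ← Real.sqrt_mul (hm i)]
  simp [inertiaTensorDual]

theorem exists_inertiaTensor_eigenvector [Fintype ι] [Fintype n] [DecidableEq ι] [DecidableEq n]
    (hm : ∀ k, 0 ≤ m k) {lam : ℝ} (hlam : lam < M) {ψ : ι → ℝ} (hψ : ψ ⬝ᵥ ψ = 1)
    (heig : inertiaTensorDual m q M *ᵥ ψ = lam • ψ) :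
    ∃ e : n → ℝ, e ⬝ᵥ e = 1 ∧ inertiaTensor m q M *ᵥ e = lam • e ∧
      ∀ k, √(m k) * (q k ⬝ᵥ e) = √(M - lam) * ψ k := by
  rw [inertiaTensorDual_eq q M hm] at heig
  obtain ⟨e, he, heI, heA⟩ := exists_unit_mul_transpose_eigenvector _ hψ
    (mulVec_eq_sub_smul_of_smul_one_sub_mulVec_eq heig) (sub_pos.mpr hlam)
  refine ⟨e, he, ?_, fun k => ?_⟩
  · rw [inertiaTensor_eq q M hm, smul_one_sub_mulVec, heI, ← sub_smul, sub_sub_cancel]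
  · have hk := congrFun heA k
    rwa [transpose_weightedCols_mulVec_apply] at hk

end Inertia

theorem lagrange_relation {ω a b c N t : ℝ} (hω : ω = a * b * c * N ^ 2) (hb : b ≠ 0)
    (hc : c ≠ 0) (hN : N ≠ 0) (ht : t ≠ 0) :
    a = ω * (t / (b * N)) * (t / (c * N)) / t ^ 2 := by
  subst hω
  field_simp

section Normalization

variable {ι : Type*} [Fintype ι] {m : ι → ℝ} (w : ι → ℝ) {N : ℝ}

theorem sum_mul_div_mul_sq_eq (hN : N ^ 2 = ∑ i, m i / w i ^ 2) (hN0 : N ≠ 0) (t : ℝ) :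
    ∑ k, m k * (t / (w k * N)) ^ 2 = t ^ 2 := by
  have hk (k : ι) : m k * (t / (w k * N)) ^ 2 = t ^ 2 * (m k / w k ^ 2) / N ^ 2 := by ring
  simp only [hk, ← Finset.mul_sum, ← Finset.sum_div, ← hN]
  exact mul_div_cancel_right₀ _ (pow_ne_zero 2 hN0)

theorem dotProduct_self_eq_one_of_normalized (hm : ∀ i, 0 ≤ m i)
    (hN : N ^ 2 = ∑ i, m i / w i ^ 2) (hN0 : N ≠ 0) :
    (fun k => √(m k) / (w k * N)) ⬝ᵥ (fun k => √(m k) / (w k * N)) = 1 := by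
  have hk (k : ι) : √(m k) / (w k * N) * (√(m k) / (w k * N)) = m k * (1 / (w k * N)) ^ 2 := by
    rw [div_mul_div_comm, Real.mul_self_sqrt (hm k)]
    ring
  simp only [dotProduct, hk, sum_mul_div_mul_sq_eq w hN hN0, one_pow]

end Normalization

theorem stmt17_general (m : Fin 3 → ℝ) (hm : ∀ i, 0 < m i)
    (q : Fin 3 → Fin 3 → ℝ)
    (M : ℝ)
    (I : Matrix (Fin 3) (Fin 3) ℝ)
    (hI : I = M • (1 : Matrix (Fin 3) (Fin 3) ℝ) - ∑ i, m i • vecMulVec (q i) (q i))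
    (J : Matrix (Fin 3) (Fin 3) ℝ)
    (hJ : ∀ i j, J i j = (if i = j then M else 0) - Real.sqrt (m i * m j) * (q i ⬝ᵥ q j))
    (u12 u23 u31 : ℝ) (hu12 : 0 < u12) (hu23 : 0 < u23) (hu31 : 0 < u31)
    (N : ℝ) (hN : N = Real.sqrt (m 0 / u23 ^ 2 + m 1 / u31 ^ 2 + m 2 / u12 ^ 2))
    (ΨL : Fin 3 → ℝ)
    (hΨ : ΨL = N⁻¹ • ![Real.sqrt (m 0) / u23, Real.sqrt (m 1) / u31,
      Real.sqrt (m 2) / u12])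
    (lam : ℝ) (hlam : lam < M) (heig : J *ᵥ ΨL = lam • ΨL) :
    ∃ e : Fin 3 → ℝ, e ⬝ᵥ e = 1 ∧ I *ᵥ e = lam • e ∧
      q 0 ⬝ᵥ e = Real.sqrt (M - lam) / (u23 * N) ∧
      q 1 ⬝ᵥ e = Real.sqrt (M - lam) / (u31 * N) ∧
      q 2 ⬝ᵥ e = Real.sqrt (M - lam) / (u12 * N) ∧
      (0 < u12 * u23 * u31 * (m 0 / u23 ^ 2 + m 1 / u31 ^ 2 + m 2 / u12 ^ 2) ∧
        u12 = (u12 * u23 * u31 * (m 0 / u23 ^ 2 + m 1 / u31 ^ 2 + m 2 / u12 ^ 2))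
            * (q 0 ⬝ᵥ e) * (q 1 ⬝ᵥ e)
            / (m 0 * (q 0 ⬝ᵥ e) ^ 2 + m 1 * (q 1 ⬝ᵥ e) ^ 2 + m 2 * (q 2 ⬝ᵥ e) ^ 2) ∧
        u23 = (u12 * u23 * u31 * (m 0 / u23 ^ 2 + m 1 / u31 ^ 2 + m 2 / u12 ^ 2))
            * (q 1 ⬝ᵥ e) * (q 2 ⬝ᵥ e)
            / (m 0 * (q 0 ⬝ᵥ e) ^ 2 + m 1 * (q 1 ⬝ᵥ e) ^ 2 + m 2 * (q 2 ⬝ᵥ e) ^ 2) ∧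
        u31 = (u12 * u23 * u31 * (m 0 / u23 ^ 2 + m 1 / u31 ^ 2 + m 2 / u12 ^ 2))
            * (q 2 ⬝ᵥ e) * (q 0 ⬝ᵥ e)
            / (m 0 * (q 0 ⬝ᵥ e) ^ 2 + m 1 * (q 1 ⬝ᵥ e) ^ 2 + m 2 * (q 2 ⬝ᵥ e) ^ 2)) := by
  set S := m 0 / u23 ^ 2 + m 1 / u31 ^ 2 + m 2 / u12 ^ 2
  set w : Fin 3 → ℝ := ![u23, u31, u12]
  have hS : 0 < S := by have := hm 0; have := hm 1; have := hm 2; positivity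
  have hN2 : N ^ 2 = S := by rw [hN, Real.sq_sqrt hS.le]
  have hN0 : N ≠ 0 := by rw [hN]; exact (Real.sqrt_pos.mpr hS).ne'
  have hNw : N ^ 2 = ∑ i, m i / w i ^ 2 := by simp [hN2, S, w, Fin.sum_univ_three]
  have hΨw : ΨL = fun k => √(m k) / (w k * N) := by
    rw [hΨ]; ext k; fin_cases k <;> simp [w] <;> ring
  obtain ⟨e, he, heI, heq⟩ := exists_inertiaTensor_eigenvector q M (fun k => (hm k).le) hlam
    (hΨw ▸ dotProduct_self_eq_one_of_normalized w (fun k => (hm k).le) hNw hN0)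
    (by rwa [show J = inertiaTensorDual m q M from ext hJ] at heig)
  have hc (k : Fin 3) : q k ⬝ᵥ e = √(M - lam) / (w k * N) :=
    mul_left_cancel₀ (Real.sqrt_pos.mpr (hm k)).ne' ((heq k).trans (by rw [hΨw]; ring))
  obtain ⟨hc0, hc1, hc2⟩ : q 0 ⬝ᵥ e = √(M - lam) / (u23 * N) ∧
      q 1 ⬝ᵥ e = √(M - lam) / (u31 * N) ∧ q 2 ⬝ᵥ e = √(M - lam) / (u12 * N) :=
    ⟨hc 0, hc 1, hc 2⟩
  have hD : m 0 * (√(M - lam) / (u23 * N)) ^ 2 + m 1 * (√(M - lam) / (u31 * N)) ^ 2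
      + m 2 * (√(M - lam) / (u12 * N)) ^ 2 = √(M - lam) ^ 2 := by
    have := sum_mul_div_mul_sq_eq w hNw hN0 √(M - lam)
    rwa [Fin.sum_univ_three] at this
  have ht : √(M - lam) ≠ 0 := (Real.sqrt_pos.mpr (sub_pos.mpr hlam)).ne'
  refine ⟨e, he, hI ▸ heI, hc0, hc1, hc2, ?_⟩
  rw [hc0, hc1, hc2, hD]
  exact ⟨mul_pos (by positivity) hS,
    lagrange_relation (by rw [hN2]) hu23.ne' hu31.ne' hN0 ht,
    lagrange_relation (by rw [hN2]; ring) hu31.ne' hu12.ne' hN0 ht,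
    lagrange_relation (by rw [hN2]; ring) hu12.ne' hu23.ne' hN0 ht⟩

/-- (Sufficient condition on the shape for a Lagrange relative
equilibrium.) Let `u₁₂, u₂₃, u₃₁ > 0`, `N = √(m₁/u₂₃² + m₂/u₃₁² + m₃/u₁₂²)` and
`Ψ_L = (√m₁/u₂₃, √m₂/u₃₁, √m₃/u₁₂)ᵀ/N`. If `J Ψ_L = λ Ψ_L` with `λ < M`, then there
is a unit vector `e` with `I e = λ e`, `cₖ := qₖ · e` given by
`c₁ = √(M−λ)/(u₂₃ N)`, `c₂ = √(M−λ)/(u₃₁ N)`, `c₃ = √(M−λ)/(u₁₂ N)`, and with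
`ω² := u₁₂ u₂₃ u₃₁ (m₁/u₂₃² + m₂/u₃₁² + m₃/u₁₂²) > 0` the Lagrange relations
`u_ij = ω² cᵢ cⱼ/(∑ mₖ cₖ²)` hold. -/
theorem stmt17 (m : Fin 3 → ℝ) (hm : ∀ i, 0 < m i)
    (q : Fin 3 → Fin 3 → ℝ) (hq : ∀ i, q i ⬝ᵥ q i = 1)
    (M : ℝ) (hM : M = ∑ i, m i)
    (I : Matrix (Fin 3) (Fin 3) ℝ)
    (hI : I = M • (1 : Matrix (Fin 3) (Fin 3) ℝ) - ∑ i, m i • vecMulVec (q i) (q i))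
    (J : Matrix (Fin 3) (Fin 3) ℝ)
    (hJ : ∀ i j, J i j = (if i = j then M else 0) - Real.sqrt (m i * m j) * (q i ⬝ᵥ q j))
    (u12 u23 u31 : ℝ) (hu12 : 0 < u12) (hu23 : 0 < u23) (hu31 : 0 < u31)
    (N : ℝ) (hN : N = Real.sqrt (m 0 / u23 ^ 2 + m 1 / u31 ^ 2 + m 2 / u12 ^ 2))
    (ΨL : Fin 3 → ℝ)
    (hΨ : ΨL = N⁻¹ • ![Real.sqrt (m 0) / u23, Real.sqrt (m 1) / u31,
      Real.sqrt (m 2) / u12])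
    (lam : ℝ) (hlam : lam < M) (heig : J *ᵥ ΨL = lam • ΨL) :
    ∃ e : Fin 3 → ℝ, e ⬝ᵥ e = 1 ∧ I *ᵥ e = lam • e ∧
      q 0 ⬝ᵥ e = Real.sqrt (M - lam) / (u23 * N) ∧
      q 1 ⬝ᵥ e = Real.sqrt (M - lam) / (u31 * N) ∧
      q 2 ⬝ᵥ e = Real.sqrt (M - lam) / (u12 * N) ∧
      (0 < u12 * u23 * u31 * (m 0 / u23 ^ 2 + m 1 / u31 ^ 2 + m 2 / u12 ^ 2) ∧
        u12 = (u12 * u23 * u31 * (m 0 / u23 ^ 2 + m 1 / u31 ^ 2 + m 2 / u12 ^ 2))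
            * (q 0 ⬝ᵥ e) * (q 1 ⬝ᵥ e)
            / (m 0 * (q 0 ⬝ᵥ e) ^ 2 + m 1 * (q 1 ⬝ᵥ e) ^ 2 + m 2 * (q 2 ⬝ᵥ e) ^ 2) ∧
        u23 = (u12 * u23 * u31 * (m 0 / u23 ^ 2 + m 1 / u31 ^ 2 + m 2 / u12 ^ 2))
            * (q 1 ⬝ᵥ e) * (q 2 ⬝ᵥ e)
            / (m 0 * (q 0 ⬝ᵥ e) ^ 2 + m 1 * (q 1 ⬝ᵥ e) ^ 2 + m 2 * (q 2 ⬝ᵥ e) ^ 2) ∧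
        u31 = (u12 * u23 * u31 * (m 0 / u23 ^ 2 + m 1 / u31 ^ 2 + m 2 / u12 ^ 2))
            * (q 2 ⬝ᵥ e) * (q 0 ⬝ᵥ e)
            / (m 0 * (q 0 ⬝ᵥ e) ^ 2 + m 1 * (q 1 ⬝ᵥ e) ^ 2 + m 2 * (q 2 ⬝ᵥ e) ^ 2)) :=
  stmt17_general m hm q M I hI J hJ u12 u23 u31 hu12 hu23 hu31 N hN ΨL hΨ lam hlam heig
end

section
/- (Equilateral Lagrange relative equilibrium requires equal masses.) Let m₁, m₂, m₃ > 0 and σ ∈ ℝ with cos σ ≠ 1, and let J be the 3×3 matrix with diagonal entries (m₂+m₃, m₃+m₁, m₁+m₂) and off-diagonal entries J_{ij} = −√(m_i m_j) cos σ for i ≠ j. If the vector (√(m₁), √(m₂), √(m₃))ᵀ is an eigenvector of J, then m₁ = m₂ = m₃. -/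
open Matrix

/-- The matrix `J_{ij} = M δ_{ij} - √(m_i m_j) cos σ_{ij}` of a configuration on the sphere whose
mutual angles all have cosine `c`; on the diagonal `cos σ_{ii} = 1`, which leaves `M - m_i`. -/
noncomputable def equilateralJ {ι : Type*} [Fintype ι] [DecidableEq ι] (m : ι → ℝ) (c : ℝ) :
    Matrix ι ι ℝ :=
  of fun i j => if i = j then ∑ k, m k - m i else -(√(m i * m j) * c)

section

variable {ι : Type*} [Fintype ι] [DecidableEq ι] {m : ι → ℝ} {c : ℝ}

theorem equilateralJ_mulVec_sqrt (hm : ∀ i, 0 ≤ m i) :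
    equilateralJ m c *ᵥ (fun i => √(m i)) = fun i => (1 - c) * (∑ k, m k - m i) * √(m i) := by
  funext i
  have hterm : ∀ j, equilateralJ m c i j * √(m j) =
      -(c * √(m i) * m j) + if i = j then (∑ k, m k - m i + c * m i) * √(m i) else 0 := by
    intro j
    by_cases hij : i = j
    · subst hij
      simp only [equilateralJ, of_apply, if_true]
      ring
    · simp only [equilateralJ, of_apply, hij, if_false, Real.sqrt_mul (hm i)]
      linear_combination (-(c * √(m i))) * Real.mul_self_sqrt (hm j)
  simp only [mulVec, dotProduct, hterm, Finset.sum_add_distrib, Finset.sum_ite_eq,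
    Finset.mem_univ, if_true, Finset.sum_neg_distrib, ← Finset.mul_sum]
  ring

theorem eq_of_equilateralJ_mulVec_sqrt_eq_smul (hm : ∀ i, 0 < m i) (hc : c ≠ 1) {lam : ℝ}
    (h : equilateralJ m c *ᵥ (fun i => √(m i)) = lam • fun i => √(m i)) (i j : ι) :
    m i = m j := by
  have heig : ∀ k, (1 - c) * (∑ l, m l - m k) = lam := fun k => by
    have hk := congrFun h k
    rw [equilateralJ_mulVec_sqrt fun l => (hm l).le] at hk
    exact mul_right_cancel₀ (Real.sqrt_pos.2 (hm k)).ne' (by simpa using hk)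
  have := mul_left_cancel₀ (sub_ne_zero.2 hc.symm) ((heig i).trans (heig j).symm)
  linarith

end

/-- (An equilateral Lagrange relative equilibrium requires equal masses.)
If `(√m₁, √m₂, √m₃)ᵀ` is an eigenvector of the matrix `J` of an equilateral
configuration (all mutual cosines equal to `cos σ ≠ 1`), then `m₁ = m₂ = m₃`. -/
theorem stmt18 (m1 m2 m3 : ℝ) (hm1 : 0 < m1) (hm2 : 0 < m2) (hm3 : 0 < m3)
    (σ : ℝ) (hσ : Real.cos σ ≠ 1)
    (J : Matrix (Fin 3) (Fin 3) ℝ)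
    (hJ : J = !![m2 + m3, -(Real.sqrt (m1 * m2) * Real.cos σ),
        -(Real.sqrt (m1 * m3) * Real.cos σ);
      -(Real.sqrt (m2 * m1) * Real.cos σ), m3 + m1,
        -(Real.sqrt (m2 * m3) * Real.cos σ);
      -(Real.sqrt (m3 * m1) * Real.cos σ), -(Real.sqrt (m3 * m2) * Real.cos σ),
        m1 + m2])
    (lam : ℝ)
    (heig : J *ᵥ ![Real.sqrt m1, Real.sqrt m2, Real.sqrt m3]
      = lam • ![Real.sqrt m1, Real.sqrt m2, Real.sqrt m3]) :
    m1 = m2 ∧ m2 = m3 := by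
  have hJ' : J = equilateralJ ![m1, m2, m3] (Real.cos σ) := by
    rw [hJ]
    ext i j
    fin_cases i <;> fin_cases j <;> simp [equilateralJ, Fin.sum_univ_three] <;> ring
  have hsqrt : ![Real.sqrt m1, Real.sqrt m2, Real.sqrt m3] = fun i => √(![m1, m2, m3] i) := by
    ext i
    fin_cases i <;> rfl
  have hpos : ∀ i, 0 < ![m1, m2, m3] i := by
    intro i
    fin_cases i <;> assumption
  rw [hJ', hsqrt] at heig
  exact ⟨eq_of_equilateralJ_mulVec_sqrt_eq_smul hpos hσ heig 0 1,
    eq_of_equilateralJ_mulVec_sqrt_eq_smul hpos hσ heig 1 2⟩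
end

section
/- (No Lagrange relative equilibrium for a repulsive force.) Let m₁, m₂, m₃ > 0 and let u₁₂, u₂₃, u₃₁ < 0. Then there exist no reals c₁, c₂, c₃ with c_k ≠ 0 for k = 1,2,3 and no ω ∈ ℝ such that u_ij = ω² c_i c_j / (∑_{k=1}^{3} m_k c_k²) holds for all three pairs (i,j) ∈ {(1,2),(2,3),(3,1)}. -/
/-! The Lagrange relations make `u₁₂ u₂₃ u₃₁ = (ω² / ∑ mₖ cₖ²)³ (c₁ c₂ c₃)² ≥ 0`, whereas a product
of three negative numbers is negative. -/

theorem mul_mul_nonneg_of_cyclic {R : Type*} [CommRing R] [LinearOrder R] [IsStrictOrderedRing R]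
    {k a b c : R} (hk : 0 ≤ k) : 0 ≤ (k * a * b) * (k * b * c) * (k * c * a) := by
  have h : (k * a * b) * (k * b * c) * (k * c * a) = k ^ 3 * (a * b * c) ^ 2 := by ring
  rw [h]
  positivity

/-- (No Lagrange relative equilibrium for a repulsive force.)
If `u₁₂, u₂₃, u₃₁ < 0`, there are no nonzero reals `c₁, c₂, c₃` and no `ω ∈ ℝ`
satisfying the Lagrange relations `u_ij = ω² cᵢ cⱼ / (∑ mₖ cₖ²)`. -/
theorem stmt19 (m1 m2 m3 : ℝ) (hm1 : 0 < m1) (hm2 : 0 < m2) (hm3 : 0 < m3)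
    (u12 u23 u31 : ℝ) (hu12 : u12 < 0) (hu23 : u23 < 0) (hu31 : u31 < 0) :
    ¬ ∃ c1 c2 c3 ω : ℝ, c1 ≠ 0 ∧ c2 ≠ 0 ∧ c3 ≠ 0 ∧
      u12 = ω ^ 2 * c1 * c2 / (m1 * c1 ^ 2 + m2 * c2 ^ 2 + m3 * c3 ^ 2) ∧
      u23 = ω ^ 2 * c2 * c3 / (m1 * c1 ^ 2 + m2 * c2 ^ 2 + m3 * c3 ^ 2) ∧
      u31 = ω ^ 2 * c3 * c1 / (m1 * c1 ^ 2 + m2 * c2 ^ 2 + m3 * c3 ^ 2) := by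
  rintro ⟨c1, c2, c3, ω, -, -, -, e12, e23, e31⟩
  set D := m1 * c1 ^ 2 + m2 * c2 ^ 2 + m3 * c3 ^ 2
  have hk : 0 ≤ ω ^ 2 / D := div_nonneg (sq_nonneg ω) (by positivity)
  have hfactor (a b : ℝ) : ω ^ 2 * a * b / D = ω ^ 2 / D * a * b := by ring
  have hprod_nonneg : 0 ≤ u12 * u23 * u31 := by
    rw [e12, e23, e31, hfactor, hfactor, hfactor]
    exact mul_mul_nonneg_of_cyclic hk
  have hprod_neg : u12 * u23 * u31 < 0 :=
    mul_neg_of_pos_of_neg (mul_pos_of_neg_of_neg hu12 hu23) hu31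
  exact hprod_neg.not_ge hprod_nonneg
end
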